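/- arXiv:1712.06078 — 6 statements merged into one kernel-verified Lean document; each statement's English description precedes it below -/
import Mathlib

section
/- Let d ≥ 1 and let P, Q ⊂ ℝ^d be d-dimensional lattice polytopes each of which is the convex hull of a subset of the set S = {0} ∪ {e_i : 1 ≤ i ≤ d} ∪ {e_i + e_j : 1 ≤ i ≤ j ≤ d}. If the origin of ℝ^{d+1} belongs to the interior of Ω(P,Q), then Ω(P,Q) is a reflexive polytope. -/
/-- The set `S = {0} ∪ {e_i} ∪ {e_i + e_j : i ≤ j}` of `(0,1,2)`-vectors. -/
def stdSet (d : ℕ) : Set (Fin d → ℝ) :=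
  {0} ∪ {x | ∃ i : Fin d, x = Pi.single i 1} ∪
    {x | ∃ i j : Fin d, i ≤ j ∧ x = Pi.single i 1 + Pi.single j 1}

/-- `Ω(P,Q) = conv((P × {1}) ∪ ((−Q) × {−1})) ⊆ ℝ^{d+1}`. -/
def Omega {d : ℕ} (P Q : Set (Fin d → ℝ)) : Set (Fin (d + 1) → ℝ) :=
  convexHull ℝ
    ((fun p => Fin.snoc p (1 : ℝ)) '' P ∪ (fun q => Fin.snoc (-q) (-1 : ℝ)) '' Q)

/-- A point of `ℝ^m` is a lattice point if all of its coordinates are integers. -/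
def IsLatticePt {m : ℕ} (x : Fin m → ℝ) : Prop := ∀ i, ∃ z : ℤ, x i = (z : ℝ)

/-- The dual polytope `R^∨ = {y : ⟨x,y⟩ ≤ 1 for all x ∈ R}`. -/
def dualPolytope {m : ℕ} (R : Set (Fin m → ℝ)) : Set (Fin m → ℝ) :=
  {y | ∀ x ∈ R, ∑ i, x i * y i ≤ 1}

/-- A full-dimensional lattice polytope `R ⊆ ℝ^m` is reflexive if the origin is in
its interior and all vertices (extreme points) of the dual polytope are lattice points. -/
def IsReflexive {m : ℕ} (R : Set (Fin m → ℝ)) : Prop :=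
  (0 : Fin m → ℝ) ∈ interior R ∧
    ∀ y ∈ Set.extremePoints ℝ (dualPolytope R), IsLatticePt y

open Real Set

namespace Stmt0Aux

variable {d : ℕ}

/-- `p ↦ snoc p c` as an affine map. -/
noncomputable def snocAff (d : ℕ) (c : ℝ) : (Fin d → ℝ) →ᵃ[ℝ] (Fin (d + 1) → ℝ) where
  toFun := fun p => Fin.snoc p c
  linear :=
    { toFun := fun p => Fin.snoc p 0
      map_add' := fun a b => by
        funext j
        refine Fin.lastCases ?_ ?_ j <;> simp
      map_smul' := fun r a => by
        funext j
        refine Fin.lastCases ?_ ?_ j <;> simp }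
  map_vadd' := fun p v => by
    funext j
    refine Fin.lastCases ?_ ?_ j <;> simp

/-- `q ↦ snoc (-q) (-1)` as an affine map. -/
noncomputable def snocNegAff (d : ℕ) : (Fin d → ℝ) →ᵃ[ℝ] (Fin (d + 1) → ℝ) where
  toFun := fun q => Fin.snoc (-q) (-1)
  linear :=
    { toFun := fun p => Fin.snoc (-p) 0
      map_add' := fun a b => by
        funext j
        refine Fin.lastCases ?_ ?_ j <;> simp [neg_add, add_comm]
      map_smul' := fun r a => by
        funext j
        refine Fin.lastCases ?_ ?_ j <;> simp }
  map_vadd' := fun p v => by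
    funext j
    refine Fin.lastCases ?_ ?_ j <;> simp [neg_add, add_comm]

lemma sum_snoc_mul (v : Fin d → ℝ) (c : ℝ) (u : Fin (d + 1) → ℝ) :
    ∑ i, (Fin.snoc v c : Fin (d + 1) → ℝ) i * u i
      = (∑ i : Fin d, v i * u i.castSucc) + c * u (Fin.last d) := by
  rw [Fin.sum_univ_castSucc]; simp

lemma sum_single_mul (i : Fin d) (u : Fin d → ℝ) :
    ∑ k, (Pi.single i (1 : ℝ) : Fin d → ℝ) k * u k = u i := by
  simp [Pi.single_apply]

lemma cos_pm (s θ : ℝ) (hs : s = 1 ∨ s = -1) :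
    Real.cos (π * (s - θ)) = -Real.cos (π * θ) := by
  rcases hs with rfl | rfl
  · rw [mul_sub, mul_one, Real.cos_pi_sub]
  · have h : π * (-1 - θ) = -(π + π * θ) := by ring
    rw [h, Real.cos_neg, Real.cos_add, Real.cos_pi, Real.sin_pi]
    ring

lemma cos_half (s : ℝ) (hs : s = 1 ∨ s = -1) : Real.cos (π * (s / 2)) = 0 := by
  rcases hs with rfl | rfl
  · norm_num [mul_one_div, Real.cos_pi_div_two]
  · have h : π * (-1 / 2) = -(π / 2) := by ring
    rw [h, Real.cos_neg, Real.cos_pi_div_two]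

/-- The combinatorial heart: any tight `(0,1,2)`-constraint annihilates the
cosine perturbation. -/
lemma core (v : Fin d → ℝ) (hv : v ∈ stdSet d) (z : Fin d → ℝ) (t s : ℝ)
    (hs : s = 1 ∨ s = -1) (heq : (∑ i, v i * z i) + t = s) :
    (∑ i, v i * (Real.cos (π * (z i + t / 2)) - Real.cos (π * (t / 2))))
      + 2 * Real.cos (π * (t / 2)) = 0 := by
  simp only [stdSet, Set.mem_union, Set.mem_singleton_iff, Set.mem_setOf_eq] at hv
  rcases hv with (rfl | ⟨i, rfl⟩) | ⟨i, j, hij, rfl⟩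
  · -- v = 0
    simp only [Pi.zero_apply, zero_mul, Finset.sum_const_zero, zero_add] at heq ⊢
    rw [heq]
    rw [cos_half s hs]; ring
  · -- v = e_i
    rw [sum_single_mul] at heq
    rw [sum_single_mul]
    have h1 : z i + t / 2 = s - t / 2 := by linarith
    rw [h1, cos_pm _ _ hs]; ring
  · -- v = e_i + e_j
    by_cases hijeq : i = j
    · subst hijeq
      have hsum : ∀ u : Fin d → ℝ,
          ∑ k, (Pi.single i 1 + Pi.single i 1 : Fin d → ℝ) k * u k = 2 * u i := by
        intro u
        simp only [Pi.add_apply, add_mul, Finset.sum_add_distrib, sum_single_mul]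
        ring
      rw [hsum] at heq
      rw [hsum]
      have h1 : z i + t / 2 = s / 2 := by linarith
      rw [h1, cos_half s hs]; ring
    · have hsum : ∀ u : Fin d → ℝ,
          ∑ k, (Pi.single i 1 + Pi.single j 1 : Fin d → ℝ) k * u k = u i + u j := by
        intro u
        simp only [Pi.add_apply, add_mul, Finset.sum_add_distrib, sum_single_mul]
      rw [hsum] at heq
      rw [hsum]
      have h1 : z j + t / 2 = s - (z i + t / 2) := by linarith
      rw [h1, cos_pm _ _ hs]; ring

lemma stdSet_finite (d : ℕ) : (stdSet d).Finite := by
  refine (Set.Finite.union (Set.Finite.union (Set.finite_singleton _) ?_) ?_)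
  · refine (Set.finite_range (fun i : Fin d => (Pi.single i 1 : Fin d → ℝ))).subset ?_
    rintro x ⟨i, rfl⟩
    exact ⟨i, rfl⟩
  · refine (Set.finite_range (fun p : Fin d × Fin d =>
      ((Pi.single p.1 1 : Fin d → ℝ) + Pi.single p.2 1))).subset ?_
    rintro x ⟨i, j, _, rfl⟩
    exact ⟨(i, j), rfl⟩

lemma isLinearMap_dualFun (u : Fin (d + 1) → ℝ) :
    IsLinearMap ℝ (fun x : Fin (d + 1) → ℝ => ∑ i, x i * u i) := by
  constructor
  · intro a b
    simp [add_mul, Finset.sum_add_distrib]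
  · intro c a
    simp [Finset.mul_sum, smul_eq_mul, mul_assoc]

end Stmt0Aux

open Stmt0Aux

theorem stmt0 (d : ℕ) (hd : 1 ≤ d) (P Q : Set (Fin d → ℝ))
    (FP FQ : Set (Fin d → ℝ)) (hFP : FP ⊆ stdSet d) (hFQ : FQ ⊆ stdSet d)
    (hP : P = convexHull ℝ FP) (hQ : Q = convexHull ℝ FQ)
    (hPdim : Module.finrank ℝ (affineSpan ℝ P).direction = d)
    (hQdim : Module.finrank ℝ (affineSpan ℝ Q).direction = d)
    (h0 : (0 : Fin (d + 1) → ℝ) ∈ interior (Omega P Q)) :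
    IsReflexive (Omega P Q) := by
  constructor
  · exact h0
  intro y hy
  -- the finite generating set
  set F : Set (Fin (d + 1) → ℝ) :=
    (fun p => Fin.snoc p (1 : ℝ)) '' FP ∪ (fun q => Fin.snoc (-q) (-1 : ℝ)) '' FQ with hFdef
  have hOm : Omega P Q = convexHull ℝ F := by
    have h1 : ((fun p => Fin.snoc p (1 : ℝ)) '' (convexHull ℝ FP) : Set (Fin (d + 1) → ℝ))
        = convexHull ℝ ((fun p => Fin.snoc p (1 : ℝ)) '' FP) :=
      (snocAff d 1).image_convexHull FP
    have h2 : ((fun q => Fin.snoc (-q) (-1 : ℝ)) '' (convexHull ℝ FQ) : Set (Fin (d + 1) → ℝ))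
        = convexHull ℝ ((fun q => Fin.snoc (-q) (-1 : ℝ)) '' FQ) :=
      (snocNegAff d).image_convexHull FQ
    unfold Omega
    rw [hP, hQ, h1, h2, convexHull_convexHull_union_left, convexHull_convexHull_union_right]
  obtain ⟨hyD, hyext⟩ := hy
  have hFfin : F.Finite := by
    refine Set.Finite.union ?_ ?_
    · exact (Set.Finite.image _ (stdSet_finite d)).subset (Set.image_mono hFP)
    · exact (Set.Finite.image _ (stdSet_finite d)).subset (Set.image_mono hFQ)
  set t : ℝ := y (Fin.last d) with ht
  set c0 : ℝ := Real.cos (π * (t / 2)) with hc0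
  set η : Fin (d + 1) → ℝ :=
    (Fin.snoc (fun i => Real.cos (π * (y i.castSucc + t / 2)) - c0) (2 * c0) :
      Fin (d + 1) → ℝ) with hη
  -- every constraint in F holds at y
  have hle : ∀ x ∈ F, ∑ i, x i * y i ≤ 1 := by
    intro x hx
    exact hyD x (hOm ▸ subset_convexHull ℝ F hx)
  -- tight constraints annihilate η
  have hkey : ∀ x ∈ F, ∑ i, x i * y i = 1 → ∑ i, x i * η i = 0 := by
    rintro x (⟨p, hp, rfl⟩ | ⟨q, hq, rfl⟩) h1
    · rw [sum_snoc_mul] at h1 ⊢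
      rw [one_mul] at h1 ⊢
      have heq : (∑ i, p i * y i.castSucc) + t = 1 := h1
      have := core p (hFP hp) (fun i => y i.castSucc) t 1 (Or.inl rfl) heq
      simpa [hη, Fin.snoc_castSucc, Fin.snoc_last] using this
    · rw [sum_snoc_mul] at h1 ⊢
      simp only [Pi.neg_apply, neg_mul, Finset.sum_neg_distrib, neg_one_mul] at h1 ⊢
      have heq : (∑ i, q i * y i.castSucc) + t = -1 := by linarith
      have := core q (hFQ hq) (fun i => y i.castSucc) t (-1) (Or.inr rfl) heq
      have h2 : (∑ i, q i * η i.castSucc) + 2 * c0 = 0 := by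
        simpa [hη, Fin.snoc_castSucc, Fin.snoc_last] using this
      have h3 : η (Fin.last d) = 2 * c0 := by simp [hη]
      rw [h3]
      linarith
  -- choose a uniform ε
  obtain ⟨ε, hε0, hεle⟩ :
      ∃ ε : ℝ, 0 < ε ∧ ∀ x ∈ F, ε * |∑ i, x i * η i| ≤ 1 - ∑ i, x i * y i := by
    classical
    set g : (Fin (d + 1) → ℝ) → ℝ := fun x =>
      if |∑ i, x i * η i| = 0 then 1 else (1 - ∑ i, x i * y i) / |∑ i, x i * η i| with hg
    set s : Finset ℝ := insert (1 : ℝ) (hFfin.toFinset.image g) with hs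
    have hsne : s.Nonempty := ⟨1, Finset.mem_insert_self _ _⟩
    refine ⟨s.min' hsne, ?_, ?_⟩
    · have hmem := s.min'_mem hsne
      rcases Finset.mem_insert.1 hmem with h | h
      · rw [h]; norm_num
      · obtain ⟨x, hx, hgx⟩ := Finset.mem_image.1 h
        rw [Set.Finite.mem_toFinset] at hx
        rw [← hgx]
        by_cases habs : |∑ i, x i * η i| = 0
        · have hgx1 : g x = 1 := by simp only [hg]; rw [if_pos habs]
          rw [hgx1]; norm_num
        · have habs' : 0 < |∑ i, x i * η i| := lt_of_le_of_ne (abs_nonneg _) (Ne.symm habs)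
          have hlt : ∑ i, x i * y i < 1 := by
            rcases lt_or_eq_of_le (hle x hx) with h' | h'
            · exact h'
            · exact absurd (abs_eq_zero.2 (hkey x hx h')) habs
          have hgx1 : g x = (1 - ∑ i, x i * y i) / |∑ i, x i * η i| := by
            simp only [hg]; rw [if_neg habs]
          rw [hgx1]
          exact div_pos (by linarith) habs'
    · intro x hx
      by_cases habs : |∑ i, x i * η i| = 0
      · rw [habs, mul_zero]
        linarith [hle x hx]
      · have habs' : 0 < |∑ i, x i * η i| := lt_of_le_of_ne (abs_nonneg _) (Ne.symm habs)
        have hgx : g x = (1 - ∑ i, x i * y i) / |∑ i, x i * η i| := by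
          simp only [hg]; rw [if_neg habs]
        have hmem : g x ∈ s := Finset.mem_insert_of_mem
          (Finset.mem_image_of_mem g ((Set.Finite.mem_toFinset hFfin).2 hx))
        have hmin : s.min' hsne ≤ g x := Finset.min'_le s _ hmem
        have : s.min' hsne * |∑ i, x i * η i| ≤ g x * |∑ i, x i * η i| :=
          mul_le_mul_of_nonneg_right hmin (abs_nonneg _)
        rw [hgx, div_mul_cancel₀ _ habs] at this
        exact this
  -- the two perturbed points are in the dual polytope
  have hmem : ∀ σ : ℝ, σ = 1 ∨ σ = -1 → y + (σ * ε) • η ∈ dualPolytope (Omega P Q) := by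
    intro σ hσ
    rw [hOm]
    intro x hx
    have hsub : convexHull ℝ F ⊆ {x | ∑ i, x i * (y + (σ * ε) • η) i ≤ 1} := by
      apply convexHull_min ?_ (convex_halfSpace_le (isLinearMap_dualFun _) 1)
      intro x hxF
      have hsplit : ∑ i, x i * (y + (σ * ε) • η) i
          = (∑ i, x i * y i) + σ * ε * ∑ i, x i * η i := by
        simp only [Pi.add_apply, Pi.smul_apply, smul_eq_mul, mul_add, Finset.sum_add_distrib,
          Finset.mul_sum]
        congr 1
        apply Finset.sum_congr rfl
        intro i _
        ring
      have habs : σ * ε * ∑ i, x i * η i ≤ ε * |∑ i, x i * η i| := by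
        have h1 : σ * ε * ∑ i, x i * η i ≤ |σ * ε * ∑ i, x i * η i| := le_abs_self _
        have h2 : |σ * ε * ∑ i, x i * η i| = ε * |∑ i, x i * η i| := by
          rw [abs_mul, abs_mul]
          rcases hσ with rfl | rfl <;> simp [abs_of_pos hε0]
        linarith
      have := hεle x hxF
      simp only [Set.mem_setOf_eq]
      rw [hsplit]
      linarith
    exact hsub hx
  -- extremality forces η = 0
  have hη0 : η = 0 := by
    have h1 : y + (1 * ε) • η ∈ dualPolytope (Omega P Q) := hmem 1 (Or.inl rfl)
    have h2 : y + (-1 * ε) • η ∈ dualPolytope (Omega P Q) := hmem (-1) (Or.inr rfl)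
    have hseg : y ∈ openSegment ℝ (y + (1 * ε) • η) (y + (-1 * ε) • η) := by
      refine ⟨1/2, 1/2, by norm_num, by norm_num, by norm_num, ?_⟩
      funext j
      simp only [Pi.add_apply, Pi.smul_apply, smul_eq_mul]
      ring
    have := hyext h1 h2 hseg
    have hεη : (1 * ε) • η = 0 := by
      have : y + (1 * ε) • η = y + 0 := by rw [add_zero]; exact this
      exact add_left_cancel this
    have hne : (1 : ℝ) * ε ≠ 0 := by
      rw [one_mul]; exact ne_of_gt hε0
    exact (smul_eq_zero.1 hεη).resolve_left hne
  -- deduce integrality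
  have hc00 : c0 = 0 := by
    have : η (Fin.last d) = 0 := by rw [hη0]; rfl
    have h2 : (2 : ℝ) * c0 = 0 := by
      rw [← this]; simp [hη]
    linarith
  have htlast : ∃ k : ℤ, t = 2 * k + 1 := by
    obtain ⟨k, hk⟩ := Real.cos_eq_zero_iff.1 (hc0 ▸ hc00)
    refine ⟨k, ?_⟩
    have hπ : π ≠ 0 := Real.pi_ne_zero
    field_simp at hk
    -- hk : π * t = (2 * k + 1) * π  (roughly)
    nlinarith [hk, Real.pi_pos]
  obtain ⟨k, hk⟩ := htlast
  intro j
  refine Fin.lastCases ?_ ?_ j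
  · exact ⟨2 * k + 1, by rw [← ht, hk]; push_cast; ring⟩
  · intro i
    have hzero : η i.castSucc = 0 := by rw [hη0]; rfl
    have hcos : Real.cos (π * (y i.castSucc + t / 2)) = 0 := by
      have : Real.cos (π * (y i.castSucc + t / 2)) - c0 = 0 := by
        rw [← hzero]; simp [hη]
      linarith [hc00, this]
    obtain ⟨m, hm⟩ := Real.cos_eq_zero_iff.1 hcos
    refine ⟨m - k, ?_⟩
    have hπ : π ≠ 0 := Real.pi_ne_zero
    have h1 : y i.castSucc + t / 2 = (2 * m + 1) / 2 := by
      field_simp at hm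
      nlinarith [hm, Real.pi_pos]
    push_cast
    rw [hk] at h1
    linarith
end

section
/- Let A = (a_{ij}) ∈ ℤ^{d×d} be a matrix with all entries in {0,1,2} such that every row satisfies a_{id} = 1 and a_{i1} + ⋯ + a_{i,d−1} ≤ 2. If det(A) ≠ 0, then 2·A^{−1} is an integer matrix, i.e., every entry of 2·A^{−1} lies in ℤ. -/
namespace Stmt3Aux

open Finset Matrix

variable {d : ℕ}

def E (j : Fin d) : Fin d → ℤ := Pi.single j 1

section Defs
variable (A : Matrix (Fin d) (Fin d) ℤ) (τ : Fin d)
def L : Submodule ℤ (Fin d → ℤ) := Submodule.span ℤ (Set.range A)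
def IsGrd (i : Fin d) : Prop := ∀ j, j ≠ τ → A i j = 0
def IsPend (i p : Fin d) : Prop :=
  p ≠ τ ∧ A i p = 1 ∧ ∀ j, j ≠ τ → j ≠ p → A i j = 0
def IsLoop (i p : Fin d) : Prop :=
  p ≠ τ ∧ A i p = 2 ∧ ∀ j, j ≠ τ → j ≠ p → A i j = 0
def IsEdge (i p q : Fin d) : Prop :=
  p ≠ τ ∧ q ≠ τ ∧ p ≠ q ∧ A i p = 1 ∧ A i q = 1 ∧
    ∀ j, j ≠ τ → j ≠ p → j ≠ q → A i j = 0

def Edge (u v : Fin d) : Prop :=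
  ∃ i p q, IsEdge A τ i p q ∧ ((u = p ∧ v = q) ∨ (u = q ∧ v = p))

def Step : Fin d × Bool → Fin d × Bool → Prop :=
  fun a b => Edge A τ a.1 b.1 ∧ b.2 = !a.2

def Conn (u v : Fin d) (ε : Bool) : Prop :=
  Relation.ReflTransGen (Step A τ) (u, false) (v, ε)

def PendAt (p : Fin d) : Prop := ∃ i, IsPend A τ i p

def LoopAt (p : Fin d) : Prop := (∃ i, IsLoop A τ i p) ∨ Conn A τ p p true

def Pe (u : Fin d) : Prop := ∃ p, Conn A τ u p false ∧ PendAt A τ p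

def Po (u : Fin d) : Prop := ∃ p, Conn A τ u p true ∧ PendAt A τ p

def Lp (u : Fin d) : Prop := ∃ p ε, Conn A τ u p ε ∧ LoopAt A τ p

def Pinned (u : Fin d) : Prop := Pe A τ u ∨ Po A τ u ∨ Lp A τ u

def Confl : Prop :=
  (∃ i, IsGrd A τ i) ∨ (∃ u, Pe A τ u ∧ Po A τ u) ∨
    (∃ u, (Pe A τ u ∨ Po A τ u) ∧ Lp A τ u)

end Defs

section Struct

variable {A : Matrix (Fin d) (Fin d) ℤ} {τ : Fin d}
theorem rowStruct (hent : ∀ i j, A i j = 0 ∨ A i j = 1 ∨ A i j = 2)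
    (hsum : ∀ i, ∑ j ∈ Finset.univ.filter (fun j => j ≠ τ), A i j ≤ 2) (i : Fin d) :
    IsGrd A τ i ∨ (∃ p, IsPend A τ i p) ∨ (∃ p, IsLoop A τ i p) ∨
      (∃ p q, IsEdge A τ i p q) := by
  classical
  set T : Finset (Fin d) := Finset.univ.filter (fun j => j ≠ τ) with hT
  set S : Finset (Fin d) := T.filter (fun j => A i j ≠ 0) with hS
  have hmemS : ∀ j, j ∈ S ↔ (j ≠ τ ∧ A i j ≠ 0) := by
    intro j; simp [hS, hT]
  have hone : ∀ j ∈ S, 1 ≤ A i j := by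
    intro j hj
    rcases hent i j with h | h | h
    · exact absurd h ((hmemS j).1 hj).2
    · omega
    · omega
  have hnonneg : ∀ j ∈ T, 0 ≤ A i j := by
    intro j _
    rcases hent i j with h | h | h <;> omega
  have hsumS : ∑ j ∈ S, A i j ≤ 2 := by
    calc ∑ j ∈ S, A i j ≤ ∑ j ∈ T, A i j := by
          apply Finset.sum_le_sum_of_subset_of_nonneg (Finset.filter_subset _ _)
          intro j hj _; exact hnonneg j hj
      _ ≤ 2 := hsum i
  have hcard : (S.card : ℤ) ≤ 2 := by
    calc (S.card : ℤ) = ∑ _j ∈ S, (1 : ℤ) := by simp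
      _ ≤ ∑ j ∈ S, A i j := Finset.sum_le_sum hone
      _ ≤ 2 := hsumS
  have hcard2 : S.card ≤ 2 := by exact_mod_cast hcard
  have hzero : ∀ j, j ≠ τ → j ∉ S → A i j = 0 := by
    intro j hjτ hjS
    by_contra h
    exact hjS ((hmemS j).2 ⟨hjτ, h⟩)
  interval_cases hc : S.card
  · -- ground
    left
    intro j hj
    apply hzero j hj
    rw [Finset.card_eq_zero] at hc; simp [hc]
  · -- pendant or loop
    rw [Finset.card_eq_one] at hc
    obtain ⟨p, hp⟩ := hc
    have hpS : p ∈ S := by simp [hp]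
    have hpτ : p ≠ τ := ((hmemS p).1 hpS).1
    have hrest : ∀ j, j ≠ τ → j ≠ p → A i j = 0 := by
      intro j hjτ hjp
      exact hzero j hjτ (by simp [hp, hjp])
    rcases hent i p with h | h | h
    · exact absurd h ((hmemS p).1 hpS).2
    · right; left; exact ⟨p, hpτ, h, hrest⟩
    · right; right; left; exact ⟨p, hpτ, h, hrest⟩
  · -- edge
    rw [Finset.card_eq_two] at hc
    obtain ⟨p, q, hpq, hpqS⟩ := hc
    have hpS : p ∈ S := by simp [hpqS]
    have hqS : q ∈ S := by simp [hpqS]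
    have hsum2 : A i p + A i q ≤ 2 := by
      have : ∑ j ∈ S, A i j = A i p + A i q := by
        rw [hpqS, Finset.sum_insert (by simp [hpq]), Finset.sum_singleton]
      omega
    have hp1 : A i p = 1 := by have := hone p hpS; have := hone q hqS; omega
    have hq1 : A i q = 1 := by have := hone p hpS; have := hone q hqS; omega
    right; right; right
    refine ⟨p, q, ((hmemS p).1 hpS).1, ((hmemS q).1 hqS).1, hpq, hp1, hq1, ?_⟩
    intro j hjτ hjp hjq
    exact hzero j hjτ (by simp [hpqS, hjp, hjq])

theorem row_eq_of_grd (hτ1 : ∀ i, A i τ = 1) {i : Fin d} (h : IsGrd A τ i) : A i = E τ := by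
  funext j
  by_cases hj : j = τ
  · subst hj; simp [E, hτ1 i]
  · simp [E, Pi.single_apply, hj, h j hj]

theorem row_eq_of_pend (hτ1 : ∀ i, A i τ = 1) {i p : Fin d} (h : IsPend A τ i p) : A i = E p + E τ := by
  obtain ⟨hpτ, hp, hrest⟩ := h
  funext j
  by_cases hj : j = τ
  · subst hj; simp [E, Pi.single_apply, Ne.symm hpτ, hτ1 i]
  · by_cases hjp : j = p
    · subst hjp; simp [E, Pi.single_apply, hj, hp]
    · simp [E, Pi.single_apply, hj, hjp, hrest j hj hjp]

theorem row_eq_of_loop (hτ1 : ∀ i, A i τ = 1) {i p : Fin d} (h : IsLoop A τ i p) : A i = E p + E p + E τ := by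
  obtain ⟨hpτ, hp, hrest⟩ := h
  funext j
  by_cases hj : j = τ
  · subst hj; simp [E, Pi.single_apply, Ne.symm hpτ, hτ1 i]
  · by_cases hjp : j = p
    · subst hjp; simp [E, Pi.single_apply, hj, hp]
    · simp [E, Pi.single_apply, hj, hjp, hrest j hj hjp]

theorem row_eq_of_edge (hτ1 : ∀ i, A i τ = 1) {i p q : Fin d} (h : IsEdge A τ i p q) :
    A i = E p + E q + E τ := by
  obtain ⟨hpτ, hqτ, hpq, hp, hq, hrest⟩ := h
  funext j
  by_cases hj : j = τ
  · subst hj; simp [E, Pi.single_apply, Ne.symm hpτ, Ne.symm hqτ, hτ1 i]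
  · by_cases hjp : j = p
    · subst hjp; simp [E, Pi.single_apply, hj, hpq, hp]
    · by_cases hjq : j = q
      · subst hjq; simp [E, Pi.single_apply, hj, Ne.symm hpq, hq]
      · simp [E, Pi.single_apply, hj, hjp, hjq, hrest j hj hjp hjq]

theorem row_mem (i : Fin d) : A i ∈ L A := Submodule.subset_span ⟨i, rfl⟩

end Struct

end Stmt3Aux

namespace Stmt3Aux

open Finset Matrix

section Conns

variable {d : ℕ} {A : Matrix (Fin d) (Fin d) ℤ} {τ : Fin d}

theorem edge_symm {u v : Fin d} (h : Edge A τ u v) : Edge A τ v u := by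
  obtain ⟨i, p, q, hE, hc⟩ := h
  rcases hc with ⟨h1, h2⟩ | ⟨h1, h2⟩
  · exact ⟨i, p, q, hE, Or.inr ⟨h2, h1⟩⟩
  · exact ⟨i, p, q, hE, Or.inl ⟨h2, h1⟩⟩

theorem edge_ne_tau {u v : Fin d} (h : Edge A τ u v) : u ≠ τ ∧ v ≠ τ ∧ u ≠ v := by
  obtain ⟨i, p, q, ⟨hpτ, hqτ, hpq, _⟩, hc⟩ := h
  rcases hc with ⟨rfl, rfl⟩ | ⟨rfl, rfl⟩
  · exact ⟨hpτ, hqτ, hpq⟩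
  · exact ⟨hqτ, hpτ, hpq.symm⟩

theorem conn_refl (u : Fin d) : Conn A τ u u false := Relation.ReflTransGen.refl

theorem conn_tail {u v w : Fin d} {ε : Bool} (h : Conn A τ u v ε)
    (he : Edge A τ v w) : Conn A τ u w (!ε) :=
  Relation.ReflTransGen.tail h ⟨he, rfl⟩

theorem conn_single {u v : Fin d} (he : Edge A τ u v) : Conn A τ u v true :=
  conn_tail (conn_refl u) he

theorem rtg_shift {a b : Fin d × Bool}
    (h : Relation.ReflTransGen (Step A τ) a b) :
    Relation.ReflTransGen (Step A τ) (a.1, !a.2) (b.1, !b.2) := by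
  refine Relation.ReflTransGen.lift (fun x : Fin d × Bool => (x.1, !x.2)) ?_ _ _ h
  rintro ⟨x, bx⟩ ⟨y, by'⟩ ⟨he, hb⟩
  exact ⟨he, by simp [hb] at *; exact hb⟩

theorem conn_symm {u v : Fin d} {ε : Bool} (h : Conn A τ u v ε) :
    Conn A τ v u ε := by
  unfold Conn at h ⊢
  have : ∀ x : Fin d × Bool, Relation.ReflTransGen (Step A τ) (u, false) x →
      Relation.ReflTransGen (Step A τ) (x.1, false) (u, x.2) := by
    intro x h
    induction h with
    | refl => exact Relation.ReflTransGen.refl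
    | tail hab hbc ih =>
      rename_i b c
      obtain ⟨he, hb⟩ := hbc
      have s1 : Relation.ReflTransGen (Step A τ) (c.1, false) (b.1, true) :=
        Relation.ReflTransGen.single ⟨edge_symm he, rfl⟩
      have ih' : Relation.ReflTransGen (Step A τ) (b.1, true) (u, !b.2) := by
        simpa using rtg_shift (A := A) (τ := τ) ih
      have := Relation.ReflTransGen.trans s1 ih'
      rw [hb]
      -- goal : (c.1, c.2) with c.2 = !b.2
      simpa using this
  have h2 := this (v, ε) h
  simpa using h2

theorem conn_trans_ff {u v w : Fin d} {ε : Bool} (h1 : Conn A τ u v false)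
    (h2 : Conn A τ v w ε) : Conn A τ u w ε :=
  Relation.ReflTransGen.trans h1 h2

theorem conn_trans_tt {u v w : Fin d} {ε : Bool} (h1 : Conn A τ u v true)
    (h2 : Conn A τ v w ε) : Conn A τ u w (!ε) := by
  have h2' : Relation.ReflTransGen (Step A τ) (v, true) (w, !ε) := by
    simpa using rtg_shift (A := A) (τ := τ) h2
  exact Relation.ReflTransGen.trans h1 h2'

theorem conn_ne_tau {u v : Fin d} {ε : Bool} (h : Conn A τ u v ε) (hu : u ≠ τ) :
    v ≠ τ := by
  unfold Conn at h
  have : ∀ x : Fin d × Bool, Relation.ReflTransGen (Step A τ) (u, false) x →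
      x.1 ≠ τ := by
    intro x h
    induction h with
    | refl => exact hu
    | tail hab hbc ih => exact (edge_ne_tau hbc.1).2.1
  exact this (v, ε) h

theorem conn_mem {u : Fin d} {x : Fin d × Bool} (hτ1 : ∀ i, A i τ = 1)
    (h : Relation.ReflTransGen (Step A τ) (u, false) x) :
    (if x.2 then E u + E x.1 + E τ else E u - E x.1) ∈ L A := by
  induction h with
  | refl => simpa using (L A).zero_mem
  | tail hab hbc ih =>
    rename_i b c
    obtain ⟨he, hb⟩ := hbc
    obtain ⟨i, p, q, hE, hc⟩ := he
    have hrow : A i = E b.1 + E c.1 + E τ := by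
      rcases hc with ⟨h1, h2⟩ | ⟨h1, h2⟩
      · rw [h1, h2]; exact row_eq_of_edge hτ1 hE
      · rw [h1, h2, row_eq_of_edge hτ1 hE]; abel
    have hmem : E b.1 + E c.1 + E τ ∈ L A := hrow ▸ row_mem i
    rw [hb]
    cases hbb : b.2 with
    | false =>
      rw [hbb] at ih; simp only [if_neg Bool.false_ne_true] at ih
      simp only [Bool.not_false, if_pos rfl]
      have : E u + E c.1 + E τ = (E u - E b.1) + (E b.1 + E c.1 + E τ) := by abel
      rw [this]; exact (L A).add_mem ih hmem
    | true =>
      rw [hbb] at ih; simp only [if_pos rfl] at ih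
      simp only [Bool.not_true, if_neg Bool.false_ne_true]
      have : E u - E c.1 = (E u + E b.1 + E τ) - (E b.1 + E c.1 + E τ) := by abel
      rw [this]; exact (L A).sub_mem ih hmem

theorem conn_mem_ff {u v : Fin d} (hτ1 : ∀ i, A i τ = 1)
    (h : Conn A τ u v false) : E u - E v ∈ L A := by
  have := conn_mem hτ1 h; simpa using this

theorem conn_mem_tt {u v : Fin d} (hτ1 : ∀ i, A i τ = 1)
    (h : Conn A τ u v true) : E u + E v + E τ ∈ L A := by
  have := conn_mem hτ1 h; simpa using this

end Conns

end Stmt3Aux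

namespace Stmt3Aux

open Finset Matrix

section Kernel

variable {d : ℕ} {A : Matrix (Fin d) (Fin d) ℤ} {τ : Fin d}

theorem sum_single_mul (v : Fin d) (f : Fin d → ℚ) :
    ∑ j, ((E v j : ℤ) : ℚ) * f j = f v := by
  rw [Finset.sum_eq_single v]
  · simp [E]
  · intro b _ hb
    simp [E, Pi.single_apply, hb]
  · intro h; exact absurd (Finset.mem_univ v) h

theorem sum_row_grd (hτ1 : ∀ i, A i τ = 1) {i : Fin d} (h : IsGrd A τ i)
    (f : Fin d → ℚ) : ∑ j, (A i j : ℚ) * f j = f τ := by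
  simp only [row_eq_of_grd hτ1 h]
  exact sum_single_mul τ f

theorem sum_row_pend (hτ1 : ∀ i, A i τ = 1) {i p : Fin d} (h : IsPend A τ i p)
    (f : Fin d → ℚ) : ∑ j, (A i j : ℚ) * f j = f p + f τ := by
  simp only [row_eq_of_pend hτ1 h, Pi.add_apply, Int.cast_add, add_mul]
  simp only [Finset.sum_add_distrib, sum_single_mul]

theorem sum_row_loop (hτ1 : ∀ i, A i τ = 1) {i p : Fin d} (h : IsLoop A τ i p)
    (f : Fin d → ℚ) : ∑ j, (A i j : ℚ) * f j = f p + f p + f τ := by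
  simp only [row_eq_of_loop hτ1 h, Pi.add_apply, Int.cast_add, add_mul]
  simp only [Finset.sum_add_distrib, sum_single_mul]

theorem sum_row_edge (hτ1 : ∀ i, A i τ = 1) {i p q : Fin d} (h : IsEdge A τ i p q)
    (f : Fin d → ℚ) : ∑ j, (A i j : ℚ) * f j = f p + f q + f τ := by
  simp only [row_eq_of_edge hτ1 h, Pi.add_apply, Int.cast_add, add_mul]
  simp only [Finset.sum_add_distrib, sum_single_mul]

theorem rowsum_zero_of_det (hdet : A.det ≠ 0) (f : Fin d → ℚ)
    (hf : ∀ i, ∑ j, (A i j : ℚ) * f j = 0) : f = 0 := by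
  set Aq : Matrix (Fin d) (Fin d) ℚ := A.map (fun t : ℤ => (t : ℚ)) with hAq
  have hAq' : Aq = (Int.castRingHom ℚ).mapMatrix A := rfl
  have hdq : Aq.det ≠ 0 := by
    rw [hAq', ← RingHom.map_det]
    simpa using hdet
  have hinj : Function.Injective Aq.mulVec :=
    mulVec_injective_iff_isUnit.mpr ((isUnit_iff_isUnit_det _).mpr
      (isUnit_iff_ne_zero.mpr hdq))
  have h0 : Aq.mulVec f = Aq.mulVec 0 := by
    rw [Matrix.mulVec_zero]
    funext i
    have := hf i
    simpa [Matrix.mulVec, dotProduct, hAq, Matrix.map_apply] using this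
  exact hinj h0

theorem pinned_of_det (hent : ∀ i j, A i j = 0 ∨ A i j = 1 ∨ A i j = 2)
    (hτ1 : ∀ i, A i τ = 1)
    (hsum : ∀ i, ∑ j ∈ Finset.univ.filter (fun j => j ≠ τ), A i j ≤ 2)
    (hdet : A.det ≠ 0) : ∀ u, u ≠ τ → Pinned A τ u := by
  classical
  intro u₀ hu₀τ
  by_contra hnp
  set φ : Fin d → ℚ := fun v =>
    if Conn A τ u₀ v false then 1 else if Conn A τ u₀ v true then -1 else 0 with hφ
  have notboth : ∀ v, ¬(Conn A τ u₀ v false ∧ Conn A τ u₀ v true) := by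
    rintro v ⟨h1, h2⟩
    have : Conn A τ u₀ u₀ true := by
      have := conn_trans_ff h1 (conn_symm h2)
      simpa using this
    exact hnp (Or.inr (Or.inr ⟨u₀, false, conn_refl u₀, Or.inr this⟩))
  have hnoconn : ∀ v ε, Conn A τ u₀ v ε → v ≠ τ := fun v ε h => conn_ne_tau h hu₀τ
  have hφτ : φ τ = 0 := by
    rw [hφ]
    simp only
    rw [if_neg (fun h => hnoconn τ false h rfl), if_neg (fun h => hnoconn τ true h rfl)]
  have hnopend : ∀ p, PendAt A τ p → ∀ ε, ¬ Conn A τ u₀ p ε := by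
    intro p hp ε hc
    cases ε
    · exact hnp (Or.inl ⟨p, hc, hp⟩)
    · exact hnp (Or.inr (Or.inl ⟨p, hc, hp⟩))
  have hnoloop : ∀ p, LoopAt A τ p → ∀ ε, ¬ Conn A τ u₀ p ε := by
    intro p hp ε hc
    exact hnp (Or.inr (Or.inr ⟨p, ε, hc, hp⟩))
  have hrows : ∀ i, ∑ j, (A i j : ℚ) * φ j = 0 := by
    intro i
    rcases rowStruct hent hsum i with hg | ⟨p, hp⟩ | ⟨p, hp⟩ | ⟨p, q, hp⟩
    · rw [sum_row_grd hτ1 hg φ, hφτ]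
    · rw [sum_row_pend hτ1 hp φ]
      have h0 : φ p = 0 := by
        rw [hφ]; simp only
        rw [if_neg (hnopend p ⟨i, hp⟩ false), if_neg (hnopend p ⟨i, hp⟩ true)]
      rw [h0, hφτ]; ring
    · rw [sum_row_loop hτ1 hp φ]
      have h0 : φ p = 0 := by
        rw [hφ]; simp only
        rw [if_neg (hnoloop p (Or.inl ⟨i, hp⟩) false), if_neg (hnoloop p (Or.inl ⟨i, hp⟩) true)]
      rw [h0, hφτ]; ring
    · rw [sum_row_edge hτ1 hp φ]
      have hedge : Edge A τ p q := ⟨i, p, q, hp, Or.inl ⟨rfl, rfl⟩⟩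
      by_cases hc1 : Conn A τ u₀ p false
      · have hq : Conn A τ u₀ q true := by simpa using conn_tail hc1 hedge
        have hφp : φ p = 1 := by rw [hφ]; simp only; rw [if_pos hc1]
        have hφq : φ q = -1 := by
          rw [hφ]; simp only
          rw [if_neg (fun h => notboth q ⟨h, hq⟩), if_pos hq]
        rw [hφp, hφq, hφτ]; ring
      · by_cases hc2 : Conn A τ u₀ p true
        · have hq : Conn A τ u₀ q false := by simpa using conn_tail hc2 hedge
          have hφp : φ p = -1 := by rw [hφ]; simp only; rw [if_neg hc1, if_pos hc2]
          have hφq : φ q = 1 := by rw [hφ]; simp only; rw [if_pos hq]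
          rw [hφp, hφq, hφτ]; ring
        · have hq : ∀ ε, ¬ Conn A τ u₀ q ε := by
            intro ε hcq
            have := conn_tail hcq (edge_symm hedge)
            cases ε
            · exact hc2 (by simpa using this)
            · exact hc1 (by simpa using this)
          have hφp : φ p = 0 := by rw [hφ]; simp only; rw [if_neg hc1, if_neg hc2]
          have hφq : φ q = 0 := by
            rw [hφ]; simp only; rw [if_neg (hq false), if_neg (hq true)]
          rw [hφp, hφq, hφτ]; ring
  have := rowsum_zero_of_det hdet φ hrows
  have hφu : φ u₀ = 1 := by rw [hφ]; simp only; rw [if_pos (conn_refl u₀)]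
  rw [this] at hφu
  simp at hφu

end Kernel

end Stmt3Aux

namespace Stmt3Aux

open Finset Matrix

section Main

variable {d : ℕ} {A : Matrix (Fin d) (Fin d) ℤ} {τ : Fin d}

theorem confl_of_det (hent : ∀ i j, A i j = 0 ∨ A i j = 1 ∨ A i j = 2)
    (hτ1 : ∀ i, A i τ = 1)
    (hsum : ∀ i, ∑ j ∈ Finset.univ.filter (fun j => j ≠ τ), A i j ≤ 2)
    (hdet : A.det ≠ 0) : Confl A τ := by
  classical
  by_contra hnc
  rw [Confl, not_or, not_or] at hnc
  obtain ⟨nG, nPP, nPL⟩ := hnc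
  push_neg at nG nPP nPL
  have hpin : ∀ u, u ≠ τ → Pinned A τ u := pinned_of_det hent hτ1 hsum hdet
  set ψ : Fin d → ℚ := fun v =>
    if v = τ then 2 else if Pe A τ v then -2 else if Lp A τ v then -1 else 0 with hψ
  have hψτ : ψ τ = 2 := by rw [hψ]; simp
  -- value computation given pinnedness and no conflicts
  have hval : ∀ p, p ≠ τ → Pinned A τ p →
      (Pe A τ p ∧ ψ p = -2) ∨ (Po A τ p ∧ ψ p = 0) ∨ (Lp A τ p ∧ ψ p = -1) := by
    intro p hpτ hp
    by_cases hPe : Pe A τ p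
    · left
      refine ⟨hPe, ?_⟩
      rw [hψ]; simp only; rw [if_neg hpτ, if_pos hPe]
    · by_cases hLp : Lp A τ p
      · right; right
        refine ⟨hLp, ?_⟩
        rw [hψ]; simp only; rw [if_neg hpτ, if_neg hPe, if_pos hLp]
      · right; left
        rcases hp with h | h | h
        · exact absurd h hPe
        · refine ⟨h, ?_⟩
          rw [hψ]; simp only; rw [if_neg hpτ, if_neg hPe, if_neg hLp]
        · exact absurd h hLp
  have hedgesum : ∀ p q, Edge A τ p q → p ≠ τ → q ≠ τ → ψ p + ψ q = -2 := by
    intro p q hedge hpτ hqτ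
    rcases hval p hpτ (hpin p hpτ) with ⟨hPe, hvp⟩ | ⟨hPo, hvp⟩ | ⟨hLp, hvp⟩
    · -- q gets Po
      obtain ⟨r, hconn, hpend⟩ := hPe
      have hq : Po A τ q := by
        have := conn_trans_tt (conn_single (edge_symm hedge)) hconn
        exact ⟨r, by simpa using this, hpend⟩
      have hqPe : ¬ Pe A τ q := fun h => nPP q h hq
      have hqLp : ¬ Lp A τ q := fun h => nPL q (Or.inr hq) h
      have hvq : ψ q = 0 := by
        rw [hψ]; simp only; rw [if_neg hqτ, if_neg hqPe, if_neg hqLp]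
      rw [hvp, hvq]; ring
    · -- q gets Pe
      obtain ⟨r, hconn, hpend⟩ := hPo
      have hq : Pe A τ q := by
        have := conn_trans_tt (conn_single (edge_symm hedge)) hconn
        exact ⟨r, by simpa using this, hpend⟩
      have hvq : ψ q = -2 := by
        rw [hψ]; simp only; rw [if_neg hqτ, if_pos hq]
      rw [hvp, hvq]; ring
    · -- q gets Lp
      obtain ⟨r, ε, hconn, hloop⟩ := hLp
      have hq : Lp A τ q :=
        ⟨r, _, conn_trans_tt (conn_single (edge_symm hedge)) hconn, hloop⟩
      have hqPe : ¬ Pe A τ q := fun h => nPL q (Or.inl h) hq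
      have hvq : ψ q = -1 := by
        rw [hψ]; simp only; rw [if_neg hqτ, if_neg hqPe, if_pos hq]
      rw [hvp, hvq]; ring
  have hrows : ∀ i, ∑ j, (A i j : ℚ) * ψ j = 0 := by
    intro i
    rcases rowStruct hent hsum i with hg | ⟨p, hp⟩ | ⟨p, hp⟩ | ⟨p, q, hp⟩
    · exact absurd hg (nG i)
    · rw [sum_row_pend hτ1 hp ψ, hψτ]
      have hPe : Pe A τ p := ⟨p, conn_refl p, ⟨i, hp⟩⟩
      have hvp : ψ p = -2 := by
        rw [hψ]; simp only; rw [if_neg hp.1, if_pos hPe]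
      rw [hvp]; ring
    · rw [sum_row_loop hτ1 hp ψ, hψτ]
      have hLp : Lp A τ p := ⟨p, false, conn_refl p, Or.inl ⟨i, hp⟩⟩
      have hPe : ¬ Pe A τ p := fun h => nPL p (Or.inl h) hLp
      have hvp : ψ p = -1 := by
        rw [hψ]; simp only; rw [if_neg hp.1, if_neg hPe, if_pos hLp]
      rw [hvp]; ring
    · rw [sum_row_edge hτ1 hp ψ, hψτ]
      have hedge : Edge A τ p q := ⟨i, p, q, hp, Or.inl ⟨rfl, rfl⟩⟩
      have := hedgesum p q hedge hp.1 hp.2.1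
      rw [show ψ p + ψ q + 2 = (ψ p + ψ q) + 2 by ring, this]; ring
  have h0 := rowsum_zero_of_det hdet ψ hrows
  rw [h0] at hψτ
  simp at hψτ

theorem etau_mem (hτ1 : ∀ i, A i τ = 1) (hc : Confl A τ) : E τ ∈ L A := by
  rcases hc with ⟨i, hg⟩ | ⟨u, hPe, hPo⟩ | ⟨u, hPP, hLp⟩
  · rw [← row_eq_of_grd hτ1 hg]; exact row_mem i
  · obtain ⟨p, hcp, ip, hip⟩ := hPe
    obtain ⟨q, hcq, iq, hiq⟩ := hPo
    have ha : E u - E p ∈ L A := conn_mem_ff hτ1 hcp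
    have hb : E u + E q + E τ ∈ L A := conn_mem_tt hτ1 hcq
    have hcm : E p + E τ ∈ L A := by rw [← row_eq_of_pend hτ1 hip]; exact row_mem ip
    have hdm : E q + E τ ∈ L A := by rw [← row_eq_of_pend hτ1 hiq]; exact row_mem iq
    have key : E τ = (E p + E τ) + (E q + E τ) + (E u - E p) - (E u + E q + E τ) := by
      abel
    rw [key]
    exact (L A).sub_mem ((L A).add_mem ((L A).add_mem hcm hdm) ha) hb
  · obtain ⟨q, ε, hcq, hloop⟩ := hLp
    have hqm : E q + E q + E τ ∈ L A := by
      rcases hloop with ⟨iq, hiq⟩ | hqq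
      · rw [← row_eq_of_loop hτ1 hiq]; exact row_mem iq
      · exact conn_mem_tt hτ1 hqq
    rcases hPP with ⟨p, hcp, ip, hip⟩ | ⟨p, hcp, ip, hip⟩
    · have hpm : E p + E τ ∈ L A := by rw [← row_eq_of_pend hτ1 hip]; exact row_mem ip
      have hup : E u - E p ∈ L A := conn_mem_ff hτ1 hcp
      cases ε
      · have huq : E u - E q ∈ L A := conn_mem_ff hτ1 hcq
        have key : E τ = (2 : ℤ) • (E p + E τ) + (2 : ℤ) • (E u - E p)
            - (2 : ℤ) • (E u - E q) - (E q + E q + E τ) := by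
          simp only [smul_add, smul_sub]; abel
        rw [key]
        exact (L A).sub_mem ((L A).sub_mem ((L A).add_mem ((L A).smul_mem _ hpm)
          ((L A).smul_mem _ hup)) ((L A).smul_mem _ huq)) hqm
      · have huq : E u + E q + E τ ∈ L A := conn_mem_tt hτ1 hcq
        have key : E τ = (2 : ℤ) • (E p + E τ) + (E q + E q + E τ)
            - (2 : ℤ) • (E u + E q + E τ) + (2 : ℤ) • (E u - E p) := by
          simp only [smul_add, smul_sub]; abel
        rw [key]
        exact (L A).add_mem ((L A).sub_mem ((L A).add_mem ((L A).smul_mem _ hpm) hqm)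
          ((L A).smul_mem _ huq)) ((L A).smul_mem _ hup)
    · have hpm : E p + E τ ∈ L A := by rw [← row_eq_of_pend hτ1 hip]; exact row_mem ip
      have hup : E u + E p + E τ ∈ L A := conn_mem_tt hτ1 hcp
      cases ε
      · have huq : E u - E q ∈ L A := conn_mem_ff hτ1 hcq
        have key : E τ = (2 : ℤ) • (E p + E τ) + (E q + E q + E τ)
            - (2 : ℤ) • (E u + E p + E τ) + (2 : ℤ) • (E u - E q) := by
          simp only [smul_add, smul_sub]; abel
        rw [key]
        exact (L A).add_mem ((L A).sub_mem ((L A).add_mem ((L A).smul_mem _ hpm) hqm)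
          ((L A).smul_mem _ hup)) ((L A).smul_mem _ huq)
      · have huq : E u + E q + E τ ∈ L A := conn_mem_tt hτ1 hcq
        have key : E τ = (2 : ℤ) • (E p + E τ) - (2 : ℤ) • (E u + E p + E τ)
            + (2 : ℤ) • (E u + E q + E τ) - (E q + E q + E τ) := by
          simp only [smul_add, smul_sub]; abel
        rw [key]
        exact (L A).sub_mem ((L A).add_mem ((L A).sub_mem ((L A).smul_mem _ hpm)
          ((L A).smul_mem _ hup)) ((L A).smul_mem _ huq)) hqm

end Main

end Stmt3Aux

namespace Stmt3Aux

open Finset Matrix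

section Final

variable {d : ℕ} {A : Matrix (Fin d) (Fin d) ℤ} {τ : Fin d}

theorem two_e_mem (hτ1 : ∀ i, A i τ = 1) {u : Fin d} (hpin : Pinned A τ u)
    (hτm : E τ ∈ L A) : E u + E u ∈ L A := by
  rcases hpin with ⟨p, hcp, ip, hip⟩ | ⟨p, hcp, ip, hip⟩ | ⟨q, ε, hcq, hloop⟩
  · have hpm : E p + E τ ∈ L A := by rw [← row_eq_of_pend hτ1 hip]; exact row_mem ip
    have hup : E u - E p ∈ L A := conn_mem_ff hτ1 hcp
    have key : E u + E u = (E u - E p) + (E u - E p) + (E p + E τ) + (E p + E τ)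
        - E τ - E τ := by abel
    rw [key]
    exact (L A).sub_mem ((L A).sub_mem ((L A).add_mem ((L A).add_mem
      ((L A).add_mem hup hup) hpm) hpm) hτm) hτm
  · have hpm : E p + E τ ∈ L A := by rw [← row_eq_of_pend hτ1 hip]; exact row_mem ip
    have hup : E u + E p + E τ ∈ L A := conn_mem_tt hτ1 hcp
    have key : E u + E u = (E u + E p + E τ) + (E u + E p + E τ)
        - (E p + E τ) - (E p + E τ) := by abel
    rw [key]
    exact (L A).sub_mem ((L A).sub_mem ((L A).add_mem hup hup) hpm) hpm
  · have hqm : E q + E q + E τ ∈ L A := by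
      rcases hloop with ⟨iq, hiq⟩ | hqq
      · rw [← row_eq_of_loop hτ1 hiq]; exact row_mem iq
      · exact conn_mem_tt hτ1 hqq
    cases ε
    · have huq : E u - E q ∈ L A := conn_mem_ff hτ1 hcq
      have key : E u + E u = (E u - E q) + (E u - E q) + (E q + E q + E τ) - E τ := by
        abel
      rw [key]
      exact (L A).sub_mem ((L A).add_mem ((L A).add_mem huq huq) hqm) hτm
    · have huq : E u + E q + E τ ∈ L A := conn_mem_tt hτ1 hcq
      have key : E u + E u = (E u + E q + E τ) + (E u + E q + E τ)
          - (E q + E q + E τ) - E τ := by abel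
      rw [key]
      exact (L A).sub_mem ((L A).sub_mem ((L A).add_mem huq huq) hqm) hτm

theorem two_basis_mem (hent : ∀ i j, A i j = 0 ∨ A i j = 1 ∨ A i j = 2)
    (hτ1 : ∀ i, A i τ = 1)
    (hsum : ∀ i, ∑ j ∈ Finset.univ.filter (fun j => j ≠ τ), A i j ≤ 2)
    (hdet : A.det ≠ 0) : ∀ j, E j + E j ∈ L A := by
  have hτm : E τ ∈ L A := etau_mem hτ1 (confl_of_det hent hτ1 hsum hdet)
  intro j
  by_cases hj : j = τ
  · subst hj; exact (L A).add_mem hτm hτm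
  · exact two_e_mem hτ1 (pinned_of_det hent hτ1 hsum hdet j hj) hτm

theorem exists_C (hent : ∀ i j, A i j = 0 ∨ A i j = 1 ∨ A i j = 2)
    (hτ1 : ∀ i, A i τ = 1)
    (hsum : ∀ i, ∑ j ∈ Finset.univ.filter (fun j => j ≠ τ), A i j ≤ 2)
    (hdet : A.det ≠ 0) :
    ∃ C : Matrix (Fin d) (Fin d) ℤ, C * A = (2 : ℤ) • 1 := by
  have h2 := two_basis_mem hent hτ1 hsum hdet
  have h3 : ∀ j, ∃ c : Fin d → ℤ, ∑ i, c i • A i = E j + E j := by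
    intro j
    exact Submodule.mem_span_range_iff_exists_fun ℤ |>.mp (h2 j)
  choose c hc using h3
  refine ⟨Matrix.of (fun j i => c j i), ?_⟩
  ext j k
  have := congrFun (hc j) k
  rw [Finset.sum_apply] at this
  simp only [Pi.smul_apply, smul_eq_mul] at this
  rw [Matrix.mul_apply]
  simp only [Matrix.smul_apply, Matrix.one_apply, smul_eq_mul, Matrix.of_apply]
  rw [this]
  simp only [E, Pi.add_apply, Pi.single_apply]
  by_cases hjk : j = k
  · subst hjk; simp
  · simp [hjk, Ne.symm hjk]

end Final

theorem main (d : ℕ) (hd : 0 < d) (A : Matrix (Fin d) (Fin d) ℤ)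
    (hent : ∀ i j, A i j = 0 ∨ A i j = 1 ∨ A i j = 2)
    (hlast : ∀ i, A i ⟨d - 1, Nat.sub_lt hd Nat.one_pos⟩ = 1)
    (hsum : ∀ i,
      ∑ j ∈ Finset.univ.filter (fun j => j ≠ (⟨d - 1, Nat.sub_lt hd Nat.one_pos⟩ : Fin d)), A i j ≤ 2)
    (hdet : A.det ≠ 0) :
    ∀ i j, ∃ z : ℤ, (2 : ℚ) * (A.map (fun t => (t : ℚ)))⁻¹ i j = (z : ℚ) := by
  obtain ⟨C, hC⟩ := exists_C hent hlast hsum hdet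
  set Aq : Matrix (Fin d) (Fin d) ℚ := A.map (fun t : ℤ => (t : ℚ)) with hAq
  set Cq : Matrix (Fin d) (Fin d) ℚ := C.map (fun t : ℤ => (t : ℚ)) with hCq
  have hdq : Aq.det ≠ 0 := by
    have : Aq = (Int.castRingHom ℚ).mapMatrix A := rfl
    rw [this, ← RingHom.map_det]
    simpa using hdet
  have hunit : IsUnit Aq.det := isUnit_iff_ne_zero.mpr hdq
  have h1 : Cq * Aq = (2 : ℚ) • 1 := by
    ext i k
    rw [Matrix.mul_apply]
    have := congrArg (fun M : Matrix (Fin d) (Fin d) ℤ => (M i k : ℤ)) hC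
    simp only [Matrix.mul_apply] at this
    have h2 : ((∑ l, C i l * A l k : ℤ) : ℚ) = (((2 : ℤ) • (1 : Matrix (Fin d) (Fin d) ℤ)) i k : ℚ) := by
      exact_mod_cast congrArg (fun t : ℤ => (t : ℚ)) this
    rw [show ∑ l, Cq i l * Aq l k = ((∑ l, C i l * A l k : ℤ) : ℚ) by push_cast [hCq, hAq, Matrix.map_apply]; rfl]
    rw [h2]
    simp only [Matrix.smul_apply, Matrix.one_apply, smul_eq_mul]
    by_cases hik : i = k <;> simp [hik]
  have h4 : Cq = (2 : ℚ) • Aq⁻¹ := by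
    calc Cq = Cq * (Aq * Aq⁻¹) := by rw [Matrix.mul_nonsing_inv _ hunit, Matrix.mul_one]
      _ = (Cq * Aq) * Aq⁻¹ := by rw [Matrix.mul_assoc]
      _ = ((2 : ℚ) • 1) * Aq⁻¹ := by rw [h1]
      _ = (2 : ℚ) • Aq⁻¹ := by rw [Matrix.smul_mul, Matrix.one_mul]
  intro i j
  refine ⟨C i j, ?_⟩
  have := congrArg (fun M : Matrix (Fin d) (Fin d) ℚ => M i j) h4
  simp only [Matrix.smul_apply, smul_eq_mul] at this
  rw [← this, hCq, Matrix.map_apply]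

end Stmt3Aux

theorem stmt3 (d : ℕ) (hd : 0 < d) (A : Matrix (Fin d) (Fin d) ℤ)
    (hent : ∀ i j, A i j = 0 ∨ A i j = 1 ∨ A i j = 2)
    (hlast : ∀ i, A i ⟨d - 1, by omega⟩ = 1)
    (hsum : ∀ i,
      ∑ j ∈ Finset.univ.filter (fun j => j ≠ (⟨d - 1, by omega⟩ : Fin d)), A i j ≤ 2)
    (hdet : A.det ≠ 0) :
    ∀ i j, ∃ z : ℤ, (2 : ℚ) * (A.map (fun t => (t : ℚ)))⁻¹ i j = (z : ℚ) := by
  exact Stmt3Aux.main d hd A hent hlast hsum hdet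
end

section
/- Let d ≥ 1 and let v_1, …, v_{d+1} ∈ ℤ^{d+1} be vectors such that each v_k is of the form (w, 1) or (−w, −1) for some w belonging to the set S = {0} ∪ {e_i : 1 ≤ i ≤ d} ∪ {e_i + e_j : 1 ≤ i ≤ j ≤ d} ⊂ ℤ^d. Let V be the (d+1)×(d+1) matrix whose k-th row is v_k. If det(V) ≠ 0, then the unique solution a ∈ ℚ^{d+1} of the linear system V a = (1, 1, …, 1)^T has all of its entries in ℤ. -/
/-- The set `S = {0} ∪ {e_i} ∪ {e_i + e_j : i ≤ j}` of `(0,1,2)`-vectors (over `ℚ`). -/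
def stdSetQ (d : ℕ) : Set (Fin d → ℚ) :=
  {0} ∪ {x | ∃ i : Fin d, x = Pi.single i 1} ∪
    {x | ∃ i j : Fin d, i ≤ j ∧ x = Pi.single i 1 + Pi.single j 1}

theorem core (n : ℕ) (u v : Fin n → Fin n) (ε : Fin n → ℚ)
    (hε : ∀ k, ε k = 1 ∨ ε k = -1)
    (t : Fin n → ℚ)
    (ht : ∀ k, t (u k) + t (v k) = 2 * ε k)
    (huniq : ∀ x : Fin n → ℚ, (∀ k, x (u k) + x (v k) = 0) → x = 0) :
    ∀ i, ∃ z : ℤ, Odd z ∧ t i = (z : ℚ) := by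
  classical
  intro i₀
  by_contra hcon
  set adj : Fin n → Fin n → Prop := fun a b => ∃ k, (u k = a ∧ v k = b) ∨ (u k = b ∧ v k = a)
    with hadjdef
  set step : Fin n × Bool → Fin n × Bool → Prop := fun p q => adj p.1 q.1 ∧ q.2 = !p.2
    with hstepdef
  have hedge : ∀ a b, adj a b → ∃ e : ℤ, (e = 1 ∨ e = -1) ∧ t a + t b = 2 * (e : ℚ) := by
    rintro a b ⟨k, hk⟩
    rcases hε k with h1 | h1
    · refine ⟨1, Or.inl rfl, ?_⟩
      rcases hk with ⟨hu, hv'⟩ | ⟨hu, hv'⟩ <;> rw [← hu, ← hv'] <;>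
        simp only [Int.cast_one] <;> rw [← h1] <;> [exact ht k; linarith [ht k]]
    · refine ⟨-1, Or.inr rfl, ?_⟩
      rcases hk with ⟨hu, hv'⟩ | ⟨hu, hv'⟩ <;> rw [← hu, ← hv'] <;>
        push_cast <;> rw [← h1] <;> [exact ht k; linarith [ht k]]
  have hsymm : Symmetric step := by
    rintro ⟨a, sa⟩ ⟨b, sb⟩ ⟨h1, h2⟩
    refine ⟨?_, ?_⟩
    · obtain ⟨k, hk⟩ := h1
      exact ⟨k, hk.symm⟩
    · simp only at h2 ⊢
      subst h2; simp
  have hflip : ∀ p q : Fin n × Bool, Relation.ReflTransGen step p q →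
      Relation.ReflTransGen step (p.1, !p.2) (q.1, !q.2) := by
    intro p q h
    induction h with
    | refl => exact .refl
    | tail h1 h2 ih =>
      exact ih.tail ⟨h2.1, by simp [h2.2]⟩
  set SR : Fin n → Bool → Prop := fun j s => Relation.ReflTransGen step (i₀, true) (j, s)
    with hSRdef
  have inv : ∀ p : Fin n × Bool, Relation.ReflTransGen step (i₀, true) p →
      ∃ c : ℤ, (p.2 = true → Even c ∧ t p.1 = t i₀ + 2 * (c : ℚ)) ∧
               (p.2 = false → Odd c ∧ t p.1 = -t i₀ + 2 * (c : ℚ)) := by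
    intro p hp
    induction hp with
    | refl =>
      exact ⟨0, fun _ => ⟨Even.zero, by push_cast; ring⟩, fun h => by simp at h⟩
    | @tail q r hq hs ih =>
      obtain ⟨c, hct, hcf⟩ := ih
      obtain ⟨hadj', hb⟩ := hs
      obtain ⟨e, he, hte⟩ := hedge _ _ hadj'
      have heodd : Odd e := by rcases he with h | h <;> subst h <;> decide
      cases hq2 : q.2 with
      | true =>
        obtain ⟨hcev, hceq⟩ := hct hq2
        refine ⟨e - c, fun h => ?_, fun _ => ?_⟩
        · rw [hb, hq2] at h; simp at h
        · exact ⟨heodd.sub_even hcev, by push_cast; linarith⟩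
      | false =>
        obtain ⟨hcodd, hceq⟩ := hcf hq2
        refine ⟨e - c, fun _ => ?_, fun h => ?_⟩
        · exact ⟨heodd.sub_odd hcodd, by push_cast; linarith⟩
        · rw [hb, hq2] at h; simp at h
  by_cases hA : SR i₀ false
  · obtain ⟨c, _, hcf⟩ := inv _ hA
    obtain ⟨hodd, heq⟩ := hcf rfl
    exact hcon ⟨c, hodd, by linarith⟩
  · have hnb : ∀ j, ¬(SR j true ∧ SR j false) := by
      rintro j ⟨h1, h2⟩
      apply hA
      have h3 := hflip _ _ h1
      simp only [Bool.not_true] at h3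
      have h4 : Relation.ReflTransGen step (j, false) (i₀, false) :=
        (@Relation.ReflTransGen.stdSymm _ step ⟨hsymm⟩).symm _ _ h3
      exact h2.trans h4
    have hstep' : ∀ j s j', adj j j' → SR j s → SR j' (!s) :=
      fun j s j' ha' hs => hs.tail ⟨ha', rfl⟩
    set x : Fin n → ℚ :=
      fun j => (if SR j true then (1 : ℚ) else 0) - (if SR j false then (1 : ℚ) else 0)
      with hxdef
    have hx : ∀ k, x (u k) + x (v k) = 0 := by
      intro k
      have hadjuv : adj (u k) (v k) := ⟨k, Or.inl ⟨rfl, rfl⟩⟩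
      have hadjvu : adj (v k) (u k) := ⟨k, Or.inr ⟨rfl, rfl⟩⟩
      by_cases h1 : SR (u k) true
      · have h2 : SR (v k) false := hstep' _ _ _ hadjuv h1
        have h3 : ¬ SR (u k) false := fun h => hnb _ ⟨h1, h⟩
        have h4 : ¬ SR (v k) true := fun h => hnb _ ⟨h, h2⟩
        simp [hxdef, h1, h2, h3, h4]
      · by_cases h2 : SR (u k) false
        · have h3 : SR (v k) true := by simpa using hstep' _ _ _ hadjuv h2
          have h4 : ¬ SR (v k) false := fun h => h1 (by simpa using hstep' _ _ _ hadjvu h)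
          simp [hxdef, h1, h2, h3, h4]
        · have h3 : ¬ SR (v k) true := fun h => h2 (by simpa using hstep' _ _ _ hadjvu h)
          have h4 : ¬ SR (v k) false := fun h => h1 (by simpa using hstep' _ _ _ hadjvu h)
          simp [hxdef, h1, h2, h3, h4]
    have hx0 := huniq x hx
    have h1 : x i₀ = 1 := by
      have hrt : SR i₀ true := Relation.ReflTransGen.refl
      simp [hxdef, hrt, hA]
    rw [hx0] at h1
    simp at h1

theorem stmt4 (d : ℕ) (hd : 1 ≤ d) (v : Fin (d + 1) → Fin (d + 1) → ℚ)
    (hv : ∀ k, ∃ w ∈ stdSetQ d,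
      v k = Fin.snoc w (1 : ℚ) ∨ v k = Fin.snoc (-w) (-1 : ℚ))
    (hdet : (Matrix.of v).det ≠ 0)
    (a : Fin (d + 1) → ℚ) (ha : (Matrix.of v).mulVec a = 1) :
    ∀ k, ∃ z : ℤ, a k = (z : ℚ) := by
  classical
  choose w hw hvw using hv
  simp only [stdSetQ, Set.mem_union, Set.mem_singleton_iff, Set.mem_setOf_eq] at hw
  set b := a (Fin.last d) with hbdef
  -- evaluation of row sums
  have hsnoc : ∀ (u : Fin d → ℚ) (c : ℚ) (g : Fin (d+1) → ℚ),
      ∑ j, (Fin.snoc u c : Fin (d+1) → ℚ) j * g j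
        = (∑ i, u i * g i.castSucc) + c * g (Fin.last d) := by
    intro u c g
    rw [Fin.sum_univ_castSucc]
    simp [Fin.snoc_castSucc, Fin.snoc_last]
  have hvsum : ∀ (k : Fin (d+1)) (g : Fin (d+1) → ℚ),
      (∑ j, v k j * g j = (∑ i, w k i * g i.castSucc) + g (Fin.last d)) ∨
      (∑ j, v k j * g j = -((∑ i, w k i * g i.castSucc) + g (Fin.last d))) := by
    intro k g
    rcases hvw k with h | h
    · left; rw [h, hsnoc]; ring
    · right; rw [h, hsnoc]
      simp only [Pi.neg_apply, neg_mul]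
      rw [Finset.sum_neg_distrib]
      ring
  have hrow : ∀ k, ∃ s : ℚ, (s = 1 ∨ s = -1) ∧ (∑ i, w k i * a i.castSucc) + b = s := by
    intro k
    have h1 : ∑ j, v k j * a j = 1 := by
      have h2 := congrFun ha k
      simpa [Matrix.mulVec, dotProduct] using h2
    rcases hvsum k a with h | h
    · exact ⟨1, Or.inl rfl, by rw [h] at h1; exact h1⟩
    · exact ⟨-1, Or.inr rfl, by rw [h] at h1; linarith⟩
  have hsum_single : ∀ (i0 : Fin d) (f : Fin d → ℚ), ∑ i, (Pi.single i0 (1:ℚ) : Fin d → ℚ) i * f i = f i0 := by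
    intro i0 f
    simp [Pi.single_apply, ite_mul]
  set t : Fin (d+1) → ℚ := fun j => if j = Fin.last d then a j else 2 * a j + b with htdef
  have htlast : t (Fin.last d) = b := by simp [htdef, hbdef]
  set Y : (Fin (d+1) → ℚ) → (Fin (d+1) → ℚ) :=
    fun x j => if j = Fin.last d then x j else (x j - x (Fin.last d)) / 2 with hYdef
  have hbund : ∀ k, ∃ (p q : Fin (d+1)) (s : ℚ), (s = 1 ∨ s = -1) ∧ (t p + t q = 2 * s) ∧
      (∀ x : Fin (d+1) → ℚ, x p + x q = 0 → ∑ j, v k j * Y x j = 0) := by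
    intro k
    obtain ⟨s, hs, hrk⟩ := hrow k
    rcases hw k with (h0 | ⟨i, hi⟩) | ⟨i, j, _, hij⟩
    · -- w k = 0
      refine ⟨Fin.last d, Fin.last d, s, hs, ?_, ?_⟩
      · rw [htlast]
        have : b = s := by
          rw [h0] at hrk; simpa using hrk
        linarith
      · intro x hx
        have hxl : x (Fin.last d) = 0 := by linarith
        have hY : (∑ i, w k i * Y x i.castSucc) + Y x (Fin.last d) = 0 := by
          rw [h0]; simp [hYdef, hxl]
        rcases hvsum k (Y x) with h | h <;> rw [h, hY] <;> ring
    · -- w k = single i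
      have hne : i.castSucc ≠ Fin.last d := (Fin.castSucc_lt_last i).ne
      have hrk' : a i.castSucc + b = s := by
        rw [hi, hsum_single] at hrk; exact hrk
      refine ⟨i.castSucc, Fin.last d, s, hs, ?_, ?_⟩
      · rw [htlast]
        have ht1 : t i.castSucc = 2 * a i.castSucc + b := by simp [htdef, hne]
        rw [ht1]; linarith
      · intro x hx
        have hY : (∑ m, w k m * Y x m.castSucc) + Y x (Fin.last d) = 0 := by
          rw [hi, hsum_single]
          simp only [hYdef, hne, if_neg, if_pos]
          have : (x i.castSucc - x (Fin.last d)) / 2 + x (Fin.last d) = 0 := by linarith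
          simpa [hne] using this
        rcases hvsum k (Y x) with h | h <;> rw [h, hY] <;> ring
    · -- w k = single i + single j
      have hnei : i.castSucc ≠ Fin.last d := (Fin.castSucc_lt_last i).ne
      have hnej : j.castSucc ≠ Fin.last d := (Fin.castSucc_lt_last j).ne
      have hsum2 : ∀ f : Fin d → ℚ,
          ∑ m, ((Pi.single i (1:ℚ) + Pi.single j 1 : Fin d → ℚ)) m * f m = f i + f j := by
        intro f
        simp only [Pi.add_apply, add_mul, Finset.sum_add_distrib]
        rw [hsum_single, hsum_single]
      have hrk' : a i.castSucc + a j.castSucc + b = s := by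
        rw [hij, hsum2] at hrk; linarith
      refine ⟨i.castSucc, j.castSucc, s, hs, ?_, ?_⟩
      · have ht1 : t i.castSucc = 2 * a i.castSucc + b := by simp [htdef, hnei]
        have ht2 : t j.castSucc = 2 * a j.castSucc + b := by simp [htdef, hnej]
        rw [ht1, ht2]; linarith
      · intro x hx
        have hY : (∑ m, w k m * Y x m.castSucc) + Y x (Fin.last d) = 0 := by
          rw [hij, hsum2]
          simp only [hYdef, hnei, hnej, if_neg, if_pos]
          have : (x i.castSucc - x (Fin.last d)) / 2 + (x j.castSucc - x (Fin.last d)) / 2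
              + x (Fin.last d) = 0 := by linarith
          simpa [hnei, hnej] using this
        rcases hvsum k (Y x) with h | h <;> rw [h, hY] <;> ring
  choose p q s hs hts hker using hbund
  have huniq : ∀ x : Fin (d+1) → ℚ, (∀ k, x (p k) + x (q k) = 0) → x = 0 := by
    intro x hx
    have hy : (Matrix.of v).mulVec (Y x) = 0 := by
      funext k
      have h1 := hker k x (hx k)
      simpa [Matrix.mulVec, dotProduct] using h1
    have hy0 : Y x = 0 := Matrix.eq_zero_of_mulVec_eq_zero hdet hy
    have hl : x (Fin.last d) = 0 := by
      have h2 := congrFun hy0 (Fin.last d)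
      simpa [hYdef] using h2
    funext j
    simp only [Pi.zero_apply]
    by_cases hj : j = Fin.last d
    · rw [hj]; exact hl
    · have h2 := congrFun hy0 j
      simp only [hYdef, hj, if_neg, hl, Pi.zero_apply] at h2
      have h3 : (x j - 0) / 2 = 0 := by simpa [hl] using h2
      linarith
  have hodd := core (d+1) p q s hs t hts huniq
  intro k
  by_cases hk : k = Fin.last d
  · obtain ⟨z, _, hz⟩ := hodd (Fin.last d)
    refine ⟨z, ?_⟩
    rw [hk, ← hz, htlast, hbdef]
  · obtain ⟨z, hzo, hz⟩ := hodd k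
    obtain ⟨zl, hzlo, hzl⟩ := hodd (Fin.last d)
    have h1 : 2 * a k + b = z := by
      rw [← hz]; simp [htdef, hk]
    have h2 : b = zl := by rw [← hzl, htlast]
    obtain ⟨m, hm⟩ := hzo
    obtain ⟨ml, hml⟩ := hzlo
    refine ⟨m - ml, ?_⟩
    have hzq : (z : ℚ) = 2 * m + 1 := by exact_mod_cast congrArg (fun r : ℤ => (r : ℚ)) hm
    have hzlq : (zl : ℚ) = 2 * ml + 1 := by exact_mod_cast congrArg (fun r : ℤ => (r : ℚ)) hml
    push_cast
    linarith
end

section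
/- Let G be a finite simple graph on the vertex set [n] = {1,…,n} with no isolated vertices, and let c₀(G) be the number of connected components of G that are bipartite. Then the dimension of the edge polytope P_G (the dimension of its affine span) equals n − c₀(G) − 1. -/
open Module SimpleGraph Submodule

namespace EPAux

variable {n : ℕ} (G : SimpleGraph (Fin n))

def Spi : Set (Fin n → ℝ) :=
  {x | ∃ i j : Fin n, G.Adj i j ∧ x = Pi.single i 1 + Pi.single j 1}

def SE : Set (EuclideanSpace ℝ (Fin n)) :=
  {x | ∃ i j : Fin n, G.Adj i j ∧ x = EuclideanSpace.single i 1 + EuclideanSpace.single j 1}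

def W : Submodule ℝ (EuclideanSpace ℝ (Fin n)) where
  carrier := {f | ∀ i j : Fin n, G.Adj i j → f i + f j = 0}
  add_mem' := by
    intro a b ha hb i j h
    have h1 := ha i j h
    have h2 := hb i j h
    simp only [PiLp.add_apply]
    linarith
  zero_mem' := by intro i j h; simp
  smul_mem' := by
    intro c a ha i j h
    have h1 := ha i j h
    simp only [PiLp.smul_apply, smul_eq_mul]
    linear_combination c * h1

lemma parity {f : EuclideanSpace ℝ (Fin n)} (hf : f ∈ W G) {u v : Fin n} (w : G.Walk u v) :
    f v = (-1 : ℝ) ^ w.length * f u := by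
  induction w with
  | nil => simp
  | cons h p ih =>
      rw [ih, SimpleGraph.Walk.length_cons, pow_succ']
      have h2 := hf _ _ h
      ring_nf
      linear_combination ((-1:ℝ) ^ p.length) * h2 + ih - ih

lemma pm_of_reachable {f : EuclideanSpace ℝ (Fin n)} (hf : f ∈ W G) {u v : Fin n}
    (h : G.Reachable u v) : f v = f u ∨ f v = - f u := by
  obtain ⟨w⟩ := h
  have hp := parity G hf w
  rcases Nat.even_or_odd w.length with he | ho
  · left; rw [hp, he.neg_one_pow, one_mul]
  · right; rw [hp, ho.neg_one_pow, neg_one_mul]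

lemma nonbip_zero {f : EuclideanSpace ℝ (Fin n)} (hf : f ∈ W G) (u : Fin n)
    (h : ¬ (G.induce (G.connectedComponentMk u).supp).Colorable 2) : f u = 0 := by
  classical
  by_contra hne
  apply h
  have key : ∀ v : (G.connectedComponentMk u).supp, f ↑v = f u ∨ f ↑v = - f u := by
    rintro ⟨v, hv⟩
    rw [SimpleGraph.ConnectedComponent.mem_supp_iff] at hv
    exact pm_of_reachable G hf (SimpleGraph.ConnectedComponent.eq.mp hv).symm
  have C : (G.induce (G.connectedComponentMk u).supp).Coloring Bool :=
    SimpleGraph.Coloring.mk (fun v => if f ↑v = f u then true else false) (by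
      intro a b hab hc
      have hadj : G.Adj ↑a ↑b := hab
      have h1 := hf _ _ hadj
      have hc' : (if f ↑a = f u then true else false) = (if f ↑b = f u then true else false) := hc
      rcases key a with ha | ha <;> rcases key b with hb | hb <;>
        rw [ha, hb] at hc' h1 <;> split_ifs at hc'
      all_goals first
        | exact hne (by linarith)
        | exact absurd rfl (by assumption)
        | simp at hc'
    )
  simpa using C.colorable

/-- Predicate: a component is bipartite. -/
def Bip (c : G.ConnectedComponent) : Prop := (G.induce c.supp).Colorable 2

lemma mem_supp_self (v : Fin n) : v ∈ (G.connectedComponentMk v).supp := by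
  rw [SimpleGraph.ConnectedComponent.mem_supp_iff]

lemma out_spec (c : G.ConnectedComponent) : G.connectedComponentMk c.out = c :=
  c.out_eq

open Classical in
/-- a chosen total coloring function for each component (proper on bipartite components) -/
noncomputable def Kc (c : G.ConnectedComponent) : Fin n → Fin 2 :=
  if h : Bip G c then (fun v => if hv : v ∈ c.supp then h.some ⟨v, hv⟩ else 0) else 0

lemma Kc_ne {c : G.ConnectedComponent} (h : Bip G c) {i j : Fin n}
    (hi : i ∈ c.supp) (hj : j ∈ c.supp) (hij : G.Adj i j) : Kc G c i ≠ Kc G c j := by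
  unfold Kc
  rw [dif_pos h]
  simp only [dif_pos hi, dif_pos hj]
  exact h.some.valid (show (G.induce c.supp).Adj ⟨i, hi⟩ ⟨j, hj⟩ from hij)

noncomputable def kap (v : Fin n) : Fin 2 := Kc G (G.connectedComponentMk v) v

/-- sign function -/
noncomputable def sgn (v : Fin n) : ℝ :=
  if kap G v = Kc G (G.connectedComponentMk v) (G.connectedComponentMk v).out then 1 else -1

lemma kap_ne {i j : Fin n} (hij : G.Adj i j)
    (h : Bip G (G.connectedComponentMk i)) : kap G i ≠ kap G j := by
  have hc : G.connectedComponentMk j = G.connectedComponentMk i :=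
    SimpleGraph.ConnectedComponent.eq.mpr hij.symm.reachable
  unfold kap
  rw [hc]
  exact Kc_ne G h (mem_supp_self G i) (hc ▸ mem_supp_self G j) hij

lemma fin2_aux : ∀ a b t : Fin 2, a ≠ b → (a = t ↔ ¬ b = t) := by decide

lemma sgn_edge {i j : Fin n} (hij : G.Adj i j) (h : Bip G (G.connectedComponentMk i)) :
    sgn G i + sgn G j = 0 := by
  have hc : G.connectedComponentMk j = G.connectedComponentMk i :=
    SimpleGraph.ConnectedComponent.eq.mpr hij.symm.reachable
  have hk := kap_ne G hij h
  unfold sgn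
  rw [hc]
  have ht := fin2_aux (kap G i) (kap G j)
    (Kc G (G.connectedComponentMk i) (G.connectedComponentMk i).out) hk
  split_ifs with h1 h2 h2 <;> norm_num <;> tauto

lemma sgn_out (c : G.ConnectedComponent) : sgn G c.out = 1 := by
  unfold sgn kap
  rw [out_spec, if_pos rfl]

lemma sgn_sq (v : Fin n) : sgn G v * sgn G v = 1 := by
  unfold sgn; split_ifs <;> norm_num

noncomputable def Phi : W G →ₗ[ℝ] ({c : G.ConnectedComponent // Bip G c} → ℝ) where
  toFun f := fun c => (f : EuclideanSpace ℝ (Fin n)) c.1.out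
  map_add' a b := rfl
  map_smul' m a := rfl

lemma Phi_inj : Function.Injective (Phi G) := by
  rw [← LinearMap.ker_eq_bot (M := W G)]
  rw [LinearMap.ker_eq_bot']
  intro f hf0
  apply Subtype.ext
  ext v
  by_cases hb : Bip G (G.connectedComponentMk v)
  · have h0 : (f : EuclideanSpace ℝ (Fin n)) (G.connectedComponentMk v).out = 0 :=
      congrFun hf0 ⟨G.connectedComponentMk v, hb⟩
    have hr : G.Reachable (G.connectedComponentMk v).out v :=
      SimpleGraph.ConnectedComponent.eq.mp (out_spec G _)
    rcases pm_of_reachable G f.2 hr with h | h <;> simp [h, h0]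
  · exact nonbip_zero G f.2 v hb

open Classical in
noncomputable def gbar (g : {c : G.ConnectedComponent // Bip G c} → ℝ) :
    G.ConnectedComponent → ℝ :=
  fun c => if h : Bip G c then g ⟨c, h⟩ else 0

lemma Phi_surj : Function.Surjective (Phi G) := by
  intro g
  set F : EuclideanSpace ℝ (Fin n) :=
    (WithLp.equiv 2 (Fin n → ℝ)).symm
      (fun v => gbar G g (G.connectedComponentMk v) * sgn G v) with hF
  have hFapp : ∀ v, F v = gbar G g (G.connectedComponentMk v) * sgn G v := fun v => rfl
  have hFW : F ∈ W G := by
    intro i j hij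
    have hc : G.connectedComponentMk j = G.connectedComponentMk i :=
      SimpleGraph.ConnectedComponent.eq.mpr hij.symm.reachable
    rw [hFapp i, hFapp j, hc]
    by_cases hb : Bip G (G.connectedComponentMk i)
    · have := sgn_edge G hij hb
      linear_combination gbar G g (G.connectedComponentMk i) * this
    · unfold gbar
      rw [dif_neg hb]
      ring
  refine ⟨⟨F, hFW⟩, ?_⟩
  funext c
  show F c.1.out = g c
  rw [hFapp, out_spec, sgn_out, mul_one]
  unfold gbar
  rw [dif_pos c.2]

noncomputable def PhiEquiv : (W G) ≃ₗ[ℝ] ({c : G.ConnectedComponent // Bip G c} → ℝ) :=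
  LinearEquiv.ofBijective (Phi G) ⟨Phi_inj G, Phi_surj G⟩

lemma finrank_W : finrank ℝ (W G) = Nat.card {c : G.ConnectedComponent // Bip G c} := by
  have hfin : Finite {c : G.ConnectedComponent // Bip G c} := by
    have : Finite G.ConnectedComponent := Quot.finite _
    exact Subtype.finite
  cases nonempty_fintype {c : G.ConnectedComponent // Bip G c}
  rw [(PhiEquiv G).finrank_eq, Module.finrank_fintype_fun_eq_card, Nat.card_eq_fintype_card]

lemma orth : (Submodule.span ℝ (SE G))ᗮ = W G := by
  ext f
  rw [Submodule.mem_orthogonal]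
  constructor
  · intro h i j hij
    have := h _ (Submodule.subset_span ⟨i, j, hij, rfl⟩)
    rwa [inner_add_left, EuclideanSpace.inner_single_left,
      EuclideanSpace.inner_single_left, map_one, one_mul, one_mul] at this
  · intro hf u hu
    induction hu using Submodule.span_induction with
    | mem x hx =>
        obtain ⟨i, j, hij, rfl⟩ := hx
        rw [inner_add_left, EuclideanSpace.inner_single_left,
          EuclideanSpace.inner_single_left, map_one, one_mul, one_mul]
        exact hf i j hij
    | zero => exact inner_zero_left f
    | add x y hx hy ihx ihy => rw [inner_add_left, ihx, ihy, add_zero]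
    | smul c x hx ih => rw [real_inner_smul_left, ih, mul_zero]

lemma finrank_span_SE :
    finrank ℝ (Submodule.span ℝ (SE G)) + Nat.card {c : G.ConnectedComponent // Bip G c} = n := by
  have h := Submodule.finrank_add_finrank_orthogonal (𝕜 := ℝ) (Submodule.span ℝ (SE G))
  rw [orth, finrank_W, finrank_euclideanSpace, Fintype.card_fin] at h
  exact h

noncomputable def psi : (Fin n → ℝ) ≃ₗ[ℝ] EuclideanSpace ℝ (Fin n) :=
  (WithLp.linearEquiv 2 ℝ (Fin n → ℝ)).symm

lemma psi_single (i : Fin n) : psi (Pi.single i 1) = EuclideanSpace.single i (1 : ℝ) := by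
  rw [show (psi (Pi.single i 1) : EuclideanSpace ℝ (Fin n)) =
    (WithLp.equiv 2 (Fin n → ℝ)).symm (Pi.single i 1) from rfl, WithLp.equiv_symm_apply, EuclideanSpace.toLp_single]

lemma psi_image : ⇑(psi (n := n)) '' Spi G = SE G := by
  ext x
  constructor
  · rintro ⟨y, ⟨i, j, hij, rfl⟩, rfl⟩
    exact ⟨i, j, hij, by rw [map_add, psi_single, psi_single]⟩
  · rintro ⟨i, j, hij, rfl⟩
    exact ⟨Pi.single i 1 + Pi.single j 1, ⟨i, j, hij, rfl⟩,
      by rw [map_add, psi_single, psi_single]⟩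

lemma finrank_span_Spi_eq :
    finrank ℝ (Submodule.span ℝ (Spi G)) = finrank ℝ (Submodule.span ℝ (SE G)) := by
  rw [← (psi (n := n)).finrank_map_eq (Submodule.span ℝ (Spi G)),
    Submodule.map_span]
  simp only [LinearEquiv.coe_coe]
  exact congrArg (fun s => finrank ℝ (Submodule.span ℝ s)) (psi_image G)

noncomputable def T : (Fin n → ℝ) →ₗ[ℝ] ℝ := ∑ i : Fin n, LinearMap.proj i

lemma T_apply (x : Fin n → ℝ) : T x = ∑ i, x i := by
  simp [T, LinearMap.sum_apply]

lemma T_S : ∀ x ∈ Spi G, T x = 2 := by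
  rintro x ⟨i, j, hij, rfl⟩
  rw [T_apply]
  simp [Finset.sum_add_distrib, Finset.sum_pi_single']
  norm_num

lemma finrank_vectorSpan_add_one (hne : (Spi G).Nonempty) :
    finrank ℝ (vectorSpan ℝ (Spi G)) + 1 = finrank ℝ (Submodule.span ℝ (Spi G)) := by
  obtain ⟨p, hp⟩ := hne
  have hTp : T p = 2 := T_S G p hp
  have hp0 : p ≠ 0 := by
    intro h; rw [h, map_zero] at hTp; norm_num at hTp
  have hker : vectorSpan ℝ (Spi G) ≤ LinearMap.ker T := by
    rw [vectorSpan_def, Submodule.span_le]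
    rintro x hx
    rw [Set.mem_vsub] at hx
    obtain ⟨a, ha, b, hb, rfl⟩ := hx
    have h1 := T_S G a ha
    have h2 := T_S G b hb
    simp only [SetLike.mem_coe, LinearMap.mem_ker, vsub_eq_sub, map_sub, h1, h2, sub_self]
  have hsup : Submodule.span ℝ (Spi G) = vectorSpan ℝ (Spi G) ⊔ Submodule.span ℝ {p} := by
    apply le_antisymm
    · rw [Submodule.span_le]
      intro x hx
      have h1 : x - p ∈ vectorSpan ℝ (Spi G) := vsub_mem_vectorSpan ℝ hx hp
      have hx' : x = (x - p) + p := by abel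
      rw [SetLike.mem_coe, hx']
      exact Submodule.add_mem _ (Submodule.mem_sup_left h1)
        (Submodule.mem_sup_right (Submodule.mem_span_singleton_self p))
    · refine sup_le ?_ ?_
      · rw [vectorSpan_def, Submodule.span_le]
        rintro x hx
        rw [Set.mem_vsub] at hx
        obtain ⟨a, ha, b, hb, rfl⟩ := hx
        exact Submodule.sub_mem _ (Submodule.subset_span ha) (Submodule.subset_span hb)
      · rw [Submodule.span_le, Set.singleton_subset_iff]
        exact Submodule.subset_span hp
  have hinf : vectorSpan ℝ (Spi G) ⊓ Submodule.span ℝ {p} = ⊥ := by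
    rw [eq_bot_iff]
    rintro x ⟨hx1, hx2⟩
    rw [SetLike.mem_coe, Submodule.mem_span_singleton] at hx2
    obtain ⟨c, rfl⟩ := hx2
    have h0 : T (c • p) = 0 := hker hx1
    rw [map_smul, hTp, smul_eq_mul] at h0
    have hc : c = 0 := by linarith
    simp [hc]
  have hdim := Submodule.finrank_sup_add_finrank_inf_eq
    (vectorSpan ℝ (Spi G)) (Submodule.span ℝ {p})
  rw [hinf, ← hsup, finrank_bot, add_zero, finrank_span_singleton hp0] at hdim
  omega

end EPAux

/-- The edge polytope of a finite simple graph `G` on the vertex set `Fin n`: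
the convex hull of the vectors `e_i + e_j` for the edges `{i,j}` of `G`. -/
def edgePolytope {n : ℕ} (G : SimpleGraph (Fin n)) : Set (Fin n → ℝ) :=
  convexHull ℝ {x | ∃ i j : Fin n, G.Adj i j ∧ x = Pi.single i 1 + Pi.single j 1}

/-- The number of connected bipartite components of `G`. -/
noncomputable def numBipartiteComponents {n : ℕ} (G : SimpleGraph (Fin n)) : ℕ :=
  Nat.card {c : G.ConnectedComponent // (G.induce c.supp).Colorable 2}

theorem stmt7 (n : ℕ) (G : SimpleGraph (Fin n))
    (hiso : ∀ v : Fin n, ∃ w, G.Adj v w) :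
    Module.finrank ℝ (affineSpan ℝ (edgePolytope G)).direction =
      n - numBipartiteComponents G - 1 := by
  classical
  have hEP : edgePolytope G = convexHull ℝ (EPAux.Spi G) := rfl
  rw [hEP, affineSpan_convexHull, direction_affineSpan]
  have hnum : numBipartiteComponents G
      = Nat.card {c : G.ConnectedComponent // EPAux.Bip G c} := rfl
  rcases Nat.eq_zero_or_pos n with hn | hn
  · subst hn
    have hS : EPAux.Spi G = ∅ := by
      ext x
      simp only [EPAux.Spi, Set.mem_setOf_eq, Set.mem_empty_iff_false, iff_false, not_exists]
      intro i
      exact i.elim0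
    rw [hS]
    simp [vectorSpan_empty]
  · obtain ⟨j0, hj0⟩ := hiso ⟨0, hn⟩
    have hne : (EPAux.Spi G).Nonempty := ⟨_, ⟨_, j0, hj0, rfl⟩⟩
    have h1 := EPAux.finrank_vectorSpan_add_one G hne
    have h2 := EPAux.finrank_span_Spi_eq G
    have h3 := EPAux.finrank_span_SE G
    rw [hnum]
    omega
end

section
/- Let G be a connected non-bipartite finite simple graph on the vertex set [n] = {1,…,n}, and let π : ℝ^n → ℝ^{n−1} be the projection deleting the first coordinate, π(x₁, x₂, …, x_n) = (x₂, …, x_n). Then π maps the edge polytope P_G bijectively onto Q_G, and π maps aff(P_G) ∩ ℤ^n bijectively onto ℤ^{n−1}, where aff(P_G) denotes the affine span of P_G. In particular, Q_G is a full-dimensional unimodularly equivalent copy of P_G. -/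
/-- For a graph `G` on the vertex set `Fin (n+1)`, the polytope `Q_G ⊆ ℝ^n`:
the convex hull of the vectors `e_i + e_j` (for edges `{i,j}` of `G`) with the first
coordinate deleted. -/
def fullEdgePolytope {n : ℕ} (G : SimpleGraph (Fin (n + 1))) : Set (Fin n → ℝ) :=
  convexHull ℝ {x | ∃ i j : Fin (n + 1), G.Adj i j ∧
    x = fun k : Fin n =>
      ((Pi.single i 1 + Pi.single j 1 : Fin (n + 1) → ℝ)) k.succ}

open Finset SimpleGraph

section Aux

variable {n : ℕ} {G : SimpleGraph (Fin (n + 1))}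

/-- The generating set of the edge polytope. -/
def genSet (G : SimpleGraph (Fin (n + 1))) : Set (Fin (n + 1) → ℝ) :=
  {x | ∃ i j : Fin (n + 1), G.Adj i j ∧ x = Pi.single i 1 + Pi.single j 1}

lemma edgePolytope_eq : edgePolytope G = convexHull ℝ (genSet G) := rfl

lemma exists_edge (hnb : ¬ G.Colorable 2) : ∃ a b, G.Adj a b := by
  by_contra h
  push_neg at h
  exact hnb ⟨Coloring.mk (fun _ => (0 : Fin 2)) (fun {u v} huv => absurd huv (h u v))⟩

lemma exists_even_walk (hconn : G.Connected) (hnb : ¬ G.Colorable 2) :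
    ∀ a b : Fin (n + 1), ∃ w : G.Walk a b, Even w.length := by
  classical
  by_contra h
  push_neg at h
  obtain ⟨a, b, hab⟩ := h
  apply hnb
  have key : ∀ x : Fin (n + 1), ∀ p q : G.Walk a x, Even p.length → Even q.length := by
    intro x p q hp
    by_contra hq
    obtain ⟨r⟩ := hconn.preconnected a b
    rcases Nat.even_or_odd r.length with hr | hr
    · exact hab r hr
    · have hodd : Odd (q.append p.reverse).length := by
        rw [Walk.length_append, Walk.length_reverse]
        exact ((Nat.not_even_iff_odd.mp hq)).add_even hp
      have : Even ((q.append p.reverse).append r).length := by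
        rw [Walk.length_append]
        exact hodd.add_odd hr
      exact hab _ this
  refine ⟨Coloring.mk
    (fun v => if ∃ p : G.Walk a v, Even p.length then (0 : Fin 2) else 1) ?_⟩
  intro u v huv hcc
  by_cases hu : ∃ p : G.Walk a u, Even p.length <;>
    by_cases hv : ∃ p : G.Walk a v, Even p.length <;>
      simp only [hu, hv, if_true, if_false] at hcc
  · obtain ⟨p, hp⟩ := hu
    obtain ⟨q, hq⟩ := hv
    have := key v q (p.concat huv) hq
    rw [Walk.length_concat] at this
    exact (Nat.even_add_one.mp this) hp
  · exact absurd hcc (by decide)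
  · exact absurd hcc (by decide)
  · obtain ⟨r⟩ := hconn.preconnected a u
    have hr : ¬ Even r.length := fun he => hu ⟨r, he⟩
    have : Even (r.concat huv).length := by
      rw [Walk.length_concat]
      exact Nat.even_add_one.mpr hr
    exact hv ⟨r.concat huv, this⟩

end Aux
section Aux2

variable {n : ℕ} {G : SimpleGraph (Fin (n + 1))}

lemma walk_span {u v : Fin (n + 1)} (w : G.Walk u v) :
    (Even w.length →
      (Pi.single u 1 - Pi.single v 1 : Fin (n + 1) → ℝ) ∈ vectorSpan ℝ (genSet G)) ∧
    (¬ Even w.length →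
      (Pi.single u 1 + Pi.single v 1 : Fin (n + 1) → ℝ) ∈ affineSpan ℝ (genSet G)) := by
  induction w with
  | nil =>
    refine ⟨fun _ => ?_, fun h => absurd Even.zero h⟩
    simp only [sub_self]
    exact Submodule.zero_mem _
  | @cons u w' v h p ih =>
    have hmem : (Pi.single u 1 + Pi.single w' 1 : Fin (n + 1) → ℝ)
        ∈ affineSpan ℝ (genSet G) :=
      subset_affineSpan ℝ _ ⟨u, w', h, rfl⟩
    constructor
    · intro hev
      have hodd : ¬ Even p.length := by
        rw [Walk.length_cons, Nat.even_add_one] at hev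
        exact hev
      have h2 := ih.2 hodd
      have h3 := AffineSubspace.vsub_mem_direction hmem h2
      rw [direction_affineSpan] at h3
      have e : (Pi.single u 1 + Pi.single w' 1 : Fin (n + 1) → ℝ) -ᵥ
          (Pi.single w' 1 + Pi.single v 1) = Pi.single u 1 - Pi.single v 1 := by
        simp only [vsub_eq_sub]; abel
      rwa [e] at h3
    · intro hodd
      have hev : Even p.length := by
        rw [Walk.length_cons, Nat.even_add_one, not_not] at hodd
        exact hodd
      have h1 := ih.1 hev
      have h1' : -((Pi.single w' 1 - Pi.single v 1 : Fin (n + 1) → ℝ))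
          ∈ (affineSpan ℝ (genSet G)).direction := by
        rw [direction_affineSpan]
        exact Submodule.neg_mem _ h1
      have h3 := AffineSubspace.vadd_mem_of_mem_direction h1' hmem
      have e : -((Pi.single w' 1 - Pi.single v 1 : Fin (n + 1) → ℝ)) +ᵥ
          ((Pi.single u 1 + Pi.single w' 1 : Fin (n + 1) → ℝ))
          = (Pi.single u 1 + Pi.single v 1 : Fin (n + 1) → ℝ) := by
        simp only [vadd_eq_add]; abel
      rwa [e] at h3

/-- The hyperplane of sum `2` as an affine subspace. -/
noncomputable def sumHyperplane (n : ℕ) : AffineSubspace ℝ (Fin (n + 1) → ℝ) where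
  carrier := {x | ∑ i, x i = 2}
  smul_vsub_vadd_mem' := by
    intro c p1 p2 p3 h1 h2 h3
    simp only [Set.mem_setOf_eq] at *
    have : ∀ i, (c • (p1 -ᵥ p2) +ᵥ p3) i = c * (p1 i - p2 i) + p3 i := by
      intro i; simp [vsub_eq_sub, vadd_eq_add, mul_sub]
    rw [Finset.sum_congr rfl fun i _ => this i]
    rw [Finset.sum_add_distrib, ← Finset.mul_sum, Finset.sum_sub_distrib, h1, h2, h3]
    ring

lemma genSet_subset_hyperplane : genSet G ⊆ {x | ∑ i, x i = 2} := by
  rintro x ⟨i, j, -, rfl⟩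
  simp [Finset.sum_add_distrib, Finset.sum_pi_single']
  norm_num

lemma sum_eq_two_of_mem_affineSpan {x : Fin (n + 1) → ℝ}
    (hx : x ∈ affineSpan ℝ (genSet G)) : ∑ i, x i = 2 := by
  have : affineSpan ℝ (genSet G) ≤ sumHyperplane n :=
    affineSpan_le.mpr genSet_subset_hyperplane
  exact this hx

end Aux2
section Aux3

variable {n : ℕ} {G : SimpleGraph (Fin (n + 1))}

lemma smul_single_one (i : Fin (n + 1)) (c : ℝ) :
    c • (Pi.single i 1 : Fin (n + 1) → ℝ) = Pi.single i c := by
  funext k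
  by_cases h : k = i <;> simp [Pi.single_apply, h]

lemma mem_vectorSpan_of_sum_zero (hconn : G.Connected) (hnb : ¬ G.Colorable 2)
    {v : Fin (n + 1) → ℝ} (hv : ∑ i, v i = 0) :
    v ∈ vectorSpan ℝ (genSet G) := by
  have hdiff : ∀ i : Fin (n + 1),
      (Pi.single i 1 - Pi.single 0 1 : Fin (n + 1) → ℝ) ∈ vectorSpan ℝ (genSet G) := by
    intro i
    obtain ⟨w, hw⟩ := exists_even_walk hconn hnb i 0
    exact (walk_span w).1 hw
  have hrepr : v = ∑ i : Fin (n + 1),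
      v i • (Pi.single i 1 - Pi.single 0 1 : Fin (n + 1) → ℝ) := by
    have : ∀ i : Fin (n + 1), v i • (Pi.single i 1 - Pi.single 0 1 : Fin (n + 1) → ℝ)
        = Pi.single i (v i) - v i • (Pi.single 0 1 : Fin (n + 1) → ℝ) := by
      intro i; rw [smul_sub, smul_single_one]
    rw [Finset.sum_congr rfl fun i _ => this i, Finset.sum_sub_distrib,
      ← Finset.sum_smul, hv, zero_smul, sub_zero, Finset.univ_sum_single]
  rw [hrepr]
  exact Submodule.sum_mem _ fun i _ => Submodule.smul_mem _ _ (hdiff i)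

lemma mem_affineSpan_of_sum (hconn : G.Connected) (hnb : ¬ G.Colorable 2)
    {x : Fin (n + 1) → ℝ} (hx : ∑ i, x i = 2) :
    x ∈ affineSpan ℝ (genSet G) := by
  obtain ⟨a, b, hab⟩ := exists_edge hnb
  have hp0 : (Pi.single a 1 + Pi.single b 1 : Fin (n + 1) → ℝ)
      ∈ affineSpan ℝ (genSet G) := subset_affineSpan ℝ _ ⟨a, b, hab, rfl⟩
  have hs0 : ∑ i, (x - (Pi.single a 1 + Pi.single b 1 : Fin (n + 1) → ℝ)) i = 0 := by
    have h2 : ∑ i, ((Pi.single a 1 + Pi.single b 1 : Fin (n + 1) → ℝ)) i = 2 :=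
      genSet_subset_hyperplane ⟨a, b, hab, rfl⟩
    simp only [Pi.sub_apply, Finset.sum_sub_distrib, hx, h2, sub_self]
  have hv : (x - (Pi.single a 1 + Pi.single b 1 : Fin (n + 1) → ℝ))
      ∈ (affineSpan ℝ (genSet G)).direction := by
    rw [direction_affineSpan]
    exact mem_vectorSpan_of_sum_zero hconn hnb hs0
  have := AffineSubspace.vadd_mem_of_mem_direction hv hp0
  simpa [vadd_eq_add, sub_add_cancel] using this

lemma injOn_proj : Set.InjOn (fun x : Fin (n + 1) → ℝ => x ∘ Fin.succ)
    {x : Fin (n + 1) → ℝ | ∑ i, x i = 2} := by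
  intro x hx y hy h
  have hs : ∑ i : Fin n, x i.succ = ∑ i : Fin n, y i.succ := by
    refine Finset.sum_congr rfl fun i _ => ?_
    exact congrFun h i
  funext k
  refine Fin.cases ?_ (fun i => congrFun h i) k
  have hx' : x 0 + ∑ i : Fin n, x i.succ = 2 := by
    rw [← Fin.sum_univ_succ]; exact hx
  have hy' : y 0 + ∑ i : Fin n, y i.succ = 2 := by
    rw [← Fin.sum_univ_succ]; exact hy
  rw [hs] at hx'
  linarith

lemma image_edgePolytope :
    (fun x : Fin (n + 1) → ℝ => x ∘ Fin.succ) '' edgePolytope G = fullEdgePolytope G := by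
  have hmap : (fun x : Fin (n + 1) → ℝ => x ∘ Fin.succ)
      = ⇑(LinearMap.funLeft ℝ ℝ (Fin.succ : Fin n → Fin (n + 1))) := rfl
  rw [edgePolytope_eq, hmap, LinearMap.image_convexHull]
  unfold fullEdgePolytope
  congr 1
  ext y
  constructor
  · rintro ⟨x, ⟨i, j, hij, rfl⟩, rfl⟩
    exact ⟨i, j, hij, rfl⟩
  · rintro ⟨i, j, hij, rfl⟩
    exact ⟨_, ⟨i, j, hij, rfl⟩, rfl⟩

end Aux3
theorem stmt9 (n : ℕ) (G : SimpleGraph (Fin (n + 1)))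
    (hconn : G.Connected) (hnb : ¬ G.Colorable 2) :
    Set.BijOn (fun x : Fin (n + 1) → ℝ => x ∘ Fin.succ)
        (edgePolytope G) (fullEdgePolytope G) ∧
    Set.BijOn (fun x : Fin (n + 1) → ℝ => x ∘ Fin.succ)
        {x | x ∈ affineSpan ℝ (edgePolytope G) ∧ IsLatticePt x}
        {y : Fin n → ℝ | IsLatticePt y} := by
  have hspan : affineSpan ℝ (edgePolytope G) = affineSpan ℝ (genSet G) := by
    rw [edgePolytope_eq, affineSpan_convexHull]
  have hPA : edgePolytope G ⊆ (affineSpan ℝ (genSet G) : Set _) := by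
    intro x hx
    have := subset_affineSpan ℝ (edgePolytope G) hx
    rwa [hspan] at this
  have hPH : edgePolytope G ⊆ {x : Fin (n + 1) → ℝ | ∑ i, x i = 2} :=
    fun x hx => sum_eq_two_of_mem_affineSpan (hPA hx)
  constructor
  · exact ⟨Set.mapsTo_iff_image_subset.mpr image_edgePolytope.le, injOn_proj.mono hPH,
      image_edgePolytope.ge⟩
  · refine ⟨?_, ?_, ?_⟩
    · intro x hx i
      exact hx.2 i.succ
    · refine injOn_proj.mono ?_
      intro x hx
      exact sum_eq_two_of_mem_affineSpan (hspan ▸ hx.1)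
    · intro y hy
      choose z hz using hy
      have hsum : ∑ i, (Fin.cons (2 - ∑ i, y i) y : Fin (n + 1) → ℝ) i = 2 := by
        rw [Fin.sum_univ_succ, Fin.cons_zero]
        simp only [Fin.cons_succ]
        ring
      refine ⟨Fin.cons (2 - ∑ i, y i) y, ⟨?_, ?_⟩, ?_⟩
      · rw [hspan]
        exact mem_affineSpan_of_sum hconn hnb hsum
      · intro k
        refine Fin.cases ?_ (fun i => ?_) k
        · refine ⟨2 - ∑ i, z i, ?_⟩
          rw [Fin.cons_zero]
          push_cast
          rw [Finset.sum_congr rfl fun i _ => hz i]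
        · rw [Fin.cons_succ]
          exact ⟨z i, hz i⟩
      · funext i
        simp [Function.comp, Fin.cons_succ]
end

section
/- Let P ⊂ ℝ^d be a full-dimensional polytope (the convex hull of a finite set of points) containing the origin in its interior. Then a point a ∈ ℝ^d is a vertex (extreme point) of the dual polytope P^∨ = {y ∈ ℝ^d : ⟨x,y⟩ ≤ 1 for all x ∈ P} if and only if H ∩ P is a facet of P (a face of dimension d−1), where H is the hyperplane {x ∈ ℝ^d : ⟨a,x⟩ = 1}. -/
open Module Submodule

/-- The linear functional `x ↦ ∑ i, a i * x i`. -/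
def dotL {d : ℕ} (a : Fin d → ℝ) : (Fin d → ℝ) →ₗ[ℝ] ℝ where
  toFun x := ∑ i, a i * x i
  map_add' x y := by simp [mul_add, Finset.sum_add_distrib]
  map_smul' c x := by simp [Finset.mul_sum, mul_left_comm]

@[simp] lemma dotL_apply {d : ℕ} (a x : Fin d → ℝ) : dotL a x = ∑ i, a i * x i := rfl

lemma span_rank {d : ℕ} (a : Fin d → ℝ) (T : Set (Fin d → ℝ))
    (hT : ∀ x ∈ T, ∑ i, a i * x i = 1) (hne : T.Nonempty) :
    finrank ℝ (span ℝ T) = finrank ℝ (vectorSpan ℝ T) + 1 := by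
  obtain ⟨x₀, hx₀⟩ := hne
  have hx₀1 : dotL a x₀ = 1 := hT x₀ hx₀
  set D := vectorSpan ℝ T with hD
  have hDker : D ≤ LinearMap.ker (dotL a) := by
    rw [hD, vectorSpan_def]
    refine span_le.2 ?_
    rintro v hv
    rw [Set.mem_vsub] at hv
    obtain ⟨x, hx, y, hy, rfl⟩ := hv
    simp [vsub_eq_sub, LinearMap.mem_ker, map_sub, hT x hx, hT y hy]
  have hx₀D : x₀ ∉ D := fun h => by simpa [hx₀1] using hDker h
  have hx₀0 : x₀ ≠ 0 := by rintro rfl; simp at hx₀1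
  have hspan : span ℝ T = D ⊔ (ℝ ∙ x₀) := by
    apply le_antisymm
    · refine span_le.2 fun x hx => ?_
      have h1 : x - x₀ ∈ D := by
        simpa [vsub_eq_sub] using vsub_mem_vectorSpan ℝ hx hx₀
      have h2 : x₀ ∈ (ℝ ∙ x₀) := mem_span_singleton_self x₀
      have := add_mem (mem_sup_left h1) (mem_sup_right h2 :
        x₀ ∈ D ⊔ (ℝ ∙ x₀))
      simpa using this
    · refine sup_le ?_ ?_
      · rw [hD, vectorSpan_def]
        refine span_le.2 ?_
        rintro v hv
        rw [Set.mem_vsub] at hv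
        obtain ⟨x, hx, y, hy, rfl⟩ := hv
        exact sub_mem (subset_span hx) (subset_span hy)
      · exact span_le.2 (by simpa using subset_span hx₀)
  have hinf : D ⊓ (ℝ ∙ x₀) = ⊥ := by
    rw [eq_bot_iff]
    rintro v ⟨hvD, hvK⟩
    obtain ⟨c, rfl⟩ := mem_span_singleton.1 hvK
    rcases eq_or_ne c 0 with rfl | hc
    · simp
    · exfalso
      apply hx₀D
      have := D.smul_mem c⁻¹ hvD
      rwa [smul_smul, inv_mul_cancel₀ hc, one_smul] at this
  have h := Submodule.finrank_sup_add_finrank_inf_eq D (ℝ ∙ x₀)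
  rw [hinf, finrank_bot, add_zero, finrank_span_singleton hx₀0, ← hspan] at h
  exact h

lemma exists_normal {d : ℕ} (S : Submodule ℝ (Fin d → ℝ)) (hS : S ≠ ⊤) :
    ∃ w : Fin d → ℝ, w ≠ 0 ∧ ∀ x ∈ S, ∑ i, w i * x i = 0 := by
  obtain ⟨φ, hφ, hmap⟩ := S.exists_dual_map_eq_bot_of_lt_top (lt_top_iff_ne_top.2 hS)
    inferInstance
  refine ⟨fun i => φ (fun j => if i = j then 1 else 0), ?_, ?_⟩
  · intro hw
    apply hφ
    refine LinearMap.ext fun x => ?_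
    show φ x = (0 : ℝ)
    calc φ x = ∑ i, x i * φ (fun j => if i = j then 1 else 0) := by
          conv_lhs => rw [pi_eq_sum_univ x]
          simp [smul_eq_mul]
      _ = 0 := by
          refine Finset.sum_eq_zero fun i _ => ?_
          have : (fun i => φ (fun j => if i = j then 1 else 0)) i = 0 := by rw [hw]; rfl
          simp only [this, mul_zero]
  · intro x hx
    have hx0 : φ x = 0 := by
      have : φ x ∈ S.map φ := ⟨x, hx, rfl⟩
      simpa [hmap] using this
    calc ∑ i, (fun i => φ (fun j => if i = j then 1 else 0)) i * x i
        = ∑ i, x i * φ (fun j => if i = j then 1 else 0) := by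
          exact Finset.sum_congr rfl fun i _ => mul_comm _ _
      _ = φ x := by
          conv_rhs => rw [pi_eq_sum_univ x]
          simp [smul_eq_mul]
      _ = 0 := hx0

theorem stmt14 (d : ℕ) (hd : 0 < d) (P : Set (Fin d → ℝ)) (F : Finset (Fin d → ℝ))
    (hP : P = convexHull ℝ (F : Set (Fin d → ℝ)))
    (h0 : (0 : Fin d → ℝ) ∈ interior P) (a : Fin d → ℝ) :
    a ∈ Set.extremePoints ℝ (dualPolytope P) ↔
      (({x | ∑ i, a i * x i = 1} ∩ P).Nonempty ∧
       IsExposed ℝ P ({x | ∑ i, a i * x i = 1} ∩ P) ∧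
       Module.finrank ℝ
         (affineSpan ℝ ({x | ∑ i, a i * x i = 1} ∩ P)).direction = d - 1) := by
  have hPconv : Convex ℝ P := hP ▸ convex_convexHull ℝ _
  have hFP : (F : Set (Fin d → ℝ)) ⊆ P := hP ▸ subset_convexHull ℝ _
  have hrank : finrank ℝ (Fin d → ℝ) = d := by
    rw [Module.finrank_pi, Fintype.card_fin]
  set T : Set (Fin d → ℝ) := {x | ∑ i, a i * x i = 1} ∩ P with hTdef
  have hTsub : ∀ x ∈ T, ∑ i, a i * x i = 1 := fun x hx => hx.1
  -- points of P lie in halfspaces determined on F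
  have hull_le : ∀ b : Fin d → ℝ, (∀ u ∈ F, ∑ i, b i * u i ≤ 1) →
      ∀ x ∈ P, ∑ i, b i * x i ≤ 1 := by
    intro b hb x hx
    rw [hP] at hx
    exact convexHull_min (fun u hu => hb u hu)
      (convex_halfSpace_le (dotL b).isLinear 1) hx
  constructor
  · rintro ⟨haP, hext⟩
    have haP' : ∀ x ∈ P, ∑ i, a i * x i ≤ 1 := fun x hx => by
      simpa [mul_comm] using haP x hx
    have hF0 : F.Nonempty := by
      rw [Finset.nonempty_iff_ne_empty]
      rintro rfl
      have : (0 : Fin d → ℝ) ∈ P := interior_subset h0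
      rw [hP] at this
      simp at this
    -- core perturbation lemma
    have core : ∀ w : Fin d → ℝ,
        (∀ u ∈ F, (∑ i, a i * u i) = 1 → ∑ i, w i * u i = 0) → w = 0 := by
      intro w hw
      by_contra hw0
      set g : (Fin d → ℝ) → ℝ := fun u =>
        if (∑ i, w i * u i) = 0 then 1 else (1 - ∑ i, a i * u i) / |∑ i, w i * u i| with hg
      have hgpos : ∀ u ∈ F, 0 < g u := by
        intro u hu
        by_cases h : (∑ i, w i * u i) = 0
        · simp [hg, h]
        · have h1 : ∑ i, a i * u i ≤ 1 := haP' u (hFP hu)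
          have h2 : ∑ i, a i * u i ≠ 1 := fun he => h (hw u hu he)
          simp only [hg, if_neg h]
          exact div_pos (by cases h1.lt_or_eq with
            | inl h => linarith
            | inr h => exact absurd h h2) (abs_pos.2 h)
      set ε : ℝ := F.inf' hF0 g with hε
      have hεpos : 0 < ε := by
        rw [hε, Finset.lt_inf'_iff]
        exact hgpos
      have key : ∀ u ∈ F, ε * |∑ i, w i * u i| ≤ 1 - ∑ i, a i * u i := by
        intro u hu
        by_cases h : (∑ i, w i * u i) = 0
        · rw [h, abs_zero, mul_zero]
          linarith [haP' u (hFP hu)]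
        · have h1 : ε ≤ g u := Finset.inf'_le g hu
          rw [hg] at h1
          simp only [if_neg h] at h1
          exact (le_div_iff₀ (abs_pos.2 h)).1 h1
      have hmem : ∀ (s : ℝ), |s| = ε → a + s • w ∈ dualPolytope P := by
        intro s hs
        intro x hx
        have : ∑ i, (a + s • w) i * x i ≤ 1 := by
          apply hull_le _ ?_ x hx
          intro u hu
          have expand : ∑ i, (a + s • w) i * u i
              = (∑ i, a i * u i) + s * ∑ i, w i * u i := by
            simp only [Pi.add_apply, Pi.smul_apply, smul_eq_mul, add_mul,
              Finset.sum_add_distrib, Finset.mul_sum]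
            ring_nf
          rw [expand]
          have habs : s * ∑ i, w i * u i ≤ ε * |∑ i, w i * u i| := by
            calc s * ∑ i, w i * u i ≤ |s * ∑ i, w i * u i| := le_abs_self _
              _ = |s| * |∑ i, w i * u i| := abs_mul _ _
              _ = ε * |∑ i, w i * u i| := by rw [hs]
          linarith [key u hu]
        simpa [mul_comm] using this
      have hb : a + ε • w ∈ dualPolytope P := hmem ε (abs_of_pos hεpos)
      have hc : a + (-ε) • w ∈ dualPolytope P := hmem (-ε) (by rw [abs_neg, abs_of_pos hεpos])
      have hseg : a ∈ openSegment ℝ (a + ε • w) (a + (-ε) • w) := by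
        refine ⟨1/2, 1/2, by norm_num, by norm_num, by norm_num, ?_⟩
        module
      have h1 := hext hb hc hseg
      have : ε • w = 0 := by
        have := congrArg (fun z => z - a) h1
        simpa [add_sub_cancel_left] using this
      rcases smul_eq_zero.1 this with h | h
      · exact absurd h (ne_of_gt hεpos)
      · exact hw0 h
    -- existence of a maximizing vertex
    have hex : ∃ u ∈ F, ∑ i, a i * u i = 1 := by
      by_contra h'
      push_neg at h'
      have := core (fun _ => 1) (fun u hu h1 => absurd h1 (h' u hu))
      have h2 := congrFun this ⟨0, hd⟩
      simp at h2
    obtain ⟨u₀, hu₀F, hu₀⟩ := hex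
    have hne : T.Nonempty := ⟨u₀, hu₀, hFP hu₀F⟩
    have hSpan : Submodule.span ℝ T = ⊤ := by
      by_contra hS
      obtain ⟨w, hw0, hwv⟩ := exists_normal _ hS
      exact hw0 (core w fun u hu h1 => hwv u (Submodule.subset_span ⟨h1, hFP hu⟩))
    refine ⟨hne, ?_, ?_⟩
    · intro _
      refine ⟨(dotL a).toContinuousLinearMap, ?_⟩
      ext x
      constructor
      · rintro ⟨hx1, hxP⟩
        refine ⟨hxP, fun y hy => ?_⟩
        show dotL a y ≤ dotL a x
        simp only [dotL_apply]
        rw [hx1]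
        exact haP' y hy
      · rintro ⟨hxP, hmax⟩
        refine ⟨?_, hxP⟩
        have h1 : dotL a u₀ ≤ dotL a x := hmax u₀ (hFP hu₀F)
        simp only [dotL_apply] at h1 ⊢
        rw [hu₀] at h1
        exact le_antisymm (haP' x hxP) h1
    · have h := span_rank a T hTsub hne
      rw [hSpan, finrank_top, hrank] at h
      rw [direction_affineSpan]
      omega
  · rintro ⟨hne, hexp, hdim⟩
    -- Step A : a ∈ dualPolytope P
    have haP : a ∈ dualPolytope P := by
      intro x hx
      by_contra hgt
      push_neg at hgt
      set M : ℝ := ∑ i, x i * a i with hM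
      have hM1 : 1 < M := hgt
      have hM0 : 0 < M := by linarith
      set t : ℝ := M⁻¹ with ht
      have ht0 : 0 < t := inv_pos.2 hM0
      have ht1 : t < 1 := by
        rw [ht]
        exact inv_lt_one_of_one_lt₀ hM1
      set z : Fin d → ℝ := t • x with hz
      have hzint : z ∈ interior P := by
        have := hPconv.combo_interior_self_mem_interior h0 hx
          (by linarith : (0:ℝ) < 1 - t) (le_of_lt ht0) (by ring)
        simpa [hz] using this
      have hzT : z ∈ T := by
        refine ⟨?_, interior_subset hzint⟩
        show ∑ i, a i * z i = 1
        have : ∑ i, a i * z i = t * M := by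
          rw [hM, Finset.mul_sum]
          exact Finset.sum_congr rfl fun i _ => by simp [hz]; ring
        rw [this, ht, inv_mul_cancel₀ (ne_of_gt hM0)]
      clear_value z t
      obtain ⟨l, hlT⟩ := hexp hne
      have hzmax : ∀ y ∈ P, l y ≤ l z := by
        have := hlT ▸ hzT
        exact this.2
      have hconst : ∀ p ∈ P, l z ≤ l p := by
        intro p hp
        by_contra hlt
        push_neg at hlt
        obtain ⟨ε, hε, hball⟩ := Metric.isOpen_iff.1 isOpen_interior z hzint
        set v : Fin d → ℝ := z - p with hv
        clear_value v
        set δ : ℝ := ε / (2 * (‖v‖ + 1)) with hδ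
        have hδ0 : 0 < δ := by
          apply div_pos hε
          positivity
        have hmem : z + δ • v ∈ P := by
          apply interior_subset
          apply hball
          rw [Metric.mem_ball, dist_eq_norm]
          have : z + δ • v - z = δ • v := by ring_nf
          rw [this, norm_smul, Real.norm_eq_abs, abs_of_pos hδ0]
          have hnv : (0:ℝ) ≤ ‖v‖ := norm_nonneg v
          rw [hδ]
          rw [div_mul_eq_mul_div, div_lt_iff₀ (by positivity)]
          nlinarith
        have hcontr := hzmax _ hmem
        have hlin : l (z + δ • v) = l z + δ * (l z - l p) := by
          rw [map_add, map_smul, smul_eq_mul, hv, map_sub]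
        
        rw [hlin] at hcontr
        nlinarith
      have h0T : (0 : Fin d → ℝ) ∈ T := by
        rw [hlT]
        exact ⟨interior_subset h0, fun y hy => (hzmax y hy).trans (hconst _ (interior_subset h0))⟩
      have := h0T.1
      simp at this
    refine ⟨haP, ?_⟩
    intro b hb c hc hseg
    obtain ⟨s, t, hs, ht, hst, habc⟩ := hseg
    have hkey : ∀ x ∈ T, (∑ i, (b - c) i * x i) = 0 := by
      rintro x ⟨hx1, hxP⟩
      have hbx : ∑ i, b i * x i ≤ 1 := by simpa [mul_comm] using hb x hxP
      have hcx : ∑ i, c i * x i ≤ 1 := by simpa [mul_comm] using hc x hxP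
      have hcomb : s * (∑ i, b i * x i) + t * (∑ i, c i * x i) = 1 := by
        have : ∑ i, a i * x i = s * (∑ i, b i * x i) + t * (∑ i, c i * x i) := by
          rw [← habc]
          simp only [Pi.add_apply, Pi.smul_apply, smul_eq_mul, add_mul,
            Finset.sum_add_distrib, Finset.mul_sum]
          ring_nf
        rw [← this, hx1]
      have hb1 : ∑ i, b i * x i = 1 := by nlinarith
      have hc1 : ∑ i, c i * x i = 1 := by nlinarith
      simp only [Pi.sub_apply, sub_mul, Finset.sum_sub_distrib]
      rw [hb1, hc1, sub_self]
    have hSpan : Submodule.span ℝ T = ⊤ := by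
      apply Submodule.eq_top_of_finrank_eq
      have h := span_rank a T hTsub hne
      rw [direction_affineSpan] at hdim
      rw [h, hdim, hrank]
      omega
    have hbc : b = c := by
      have hker : Submodule.span ℝ T ≤ LinearMap.ker (dotL (b - c)) :=
        Submodule.span_le.2 fun x hx => hkey x hx
      rw [hSpan] at hker
      have h0 : dotL (b - c) (b - c) = 0 := hker Submodule.mem_top
      simp only [dotL_apply] at h0
      have hz := (Finset.sum_eq_zero_iff_of_nonneg
        (fun i _ => mul_self_nonneg ((b - c) i))).1 h0
      funext i
      have h2 := mul_self_eq_zero.1 (hz i (Finset.mem_univ i))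
      have h3 : b i - c i = 0 := h2
      linarith
    subst hbc
    rw [← add_smul, hst, one_smul] at habc
    exact habc
end
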